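/- arXiv:1811.01711 — 8 statements merged into one kernel-verified Lean document; each statement's English description precedes it below -/
import Mathlib

section
/- For indeterminates X_1,...,X_n, A_2,...,A_n, B_2,...,B_n in a commutative ring, the determinant of the n×n matrix whose (i,j) entry is (X_i+B_2)(X_i+B_3)···(X_i+B_j)·(X_i+A_{j+1})(X_i+A_{j+2})···(X_i+A_n) equals ∏_{1≤i<j≤n}(X_i−X_j) · ∏_{2≤i≤j≤n}(B_i−A_j). -/
open Polynomial Finset

/-- Newton-basis expansion existence lemma. -/
lemma newton_expand {R : Type*} [CommRing R] (n : ℕ) (B : ℕ → R) :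
    ∀ (d t : ℕ), t < n → ∀ (g : R[X]), g.natDegree ≤ d → d + t ≤ n - 1 →
    ∃ c : Fin n → R, (∀ m : Fin n, m.val < t → c m = 0) ∧
      (∀ ht : t < n, c ⟨t, ht⟩ = g.eval (-B (t + 2))) ∧
      (∏ k ∈ Icc 2 (t + 1), (X + C (B k))) * g =
        ∑ m : Fin n, C (c m) * ∏ k ∈ Icc 2 (m.val + 1), (X + C (B k)) := by
  intro d
  induction d with
  | zero =>
    intro t ht g hdeg _
    obtain ⟨r, rfl⟩ : ∃ r, g = C r := ⟨g.coeff 0, Polynomial.eq_C_of_natDegree_le_zero hdeg⟩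
    refine ⟨fun m => if m = ⟨t, ht⟩ then r else 0, fun m hm => ?_, fun ht' => ?_, ?_⟩
    · dsimp only
      rw [if_neg]
      intro hcontra
      rw [hcontra] at hm
      exact absurd hm (lt_irrefl t)
    · dsimp only
      rw [if_pos rfl, eval_C]
    · have split : ∀ m : Fin n, C (if m = (⟨t, ht⟩ : Fin n) then r else 0) *
          ∏ k ∈ Icc 2 (m.val + 1), (X + C (B k)) =
          (if m = (⟨t, ht⟩ : Fin n) then C r * ∏ k ∈ Icc 2 (m.val + 1), (X + C (B k)) else 0) := by
        intro m; split <;> simp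
      simp only [split, Finset.sum_ite_eq' Finset.univ, Finset.mem_univ, if_pos]
      ring
  | succ d ih =>
    intro t ht g hdeg hle
    set a : R := g.eval (-B (t + 2)) with ha
    obtain ⟨h, hh⟩ := Polynomial.X_sub_C_dvd_sub_C_eval (a := -B (t + 2)) (p := g)
    have hXC : Polynomial.X - C (-B (t + 2)) = Polynomial.X + C (B (t + 2)) := by
      rw [map_neg, sub_neg_eq_add]
    have hg : g = C a + (Polynomial.X + C (B (t + 2))) * h := by
      rw [← hXC]
      linear_combination hh
    have hhd : h.natDegree ≤ d := by
      rcases eq_or_ne h 0 with rfl | hne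
      · simp
      · nontriviality R
        have h1 : ((Polynomial.X - C (-B (t + 2))) * h).natDegree = 1 + h.natDegree := by
          rw [Polynomial.natDegree_mul' (by
            rw [Polynomial.leadingCoeff_X_sub_C, one_mul]
            exact Polynomial.leadingCoeff_ne_zero.mpr hne),
            Polynomial.natDegree_X_sub_C]
        have h2 : (g - C a).natDegree ≤ d + 1 := by
          refine le_trans (Polynomial.natDegree_sub_le _ _) ?_
          simp [hdeg]
        rw [hh, h1] at h2
        omega
    have ht1 : t + 1 < n := by omega
    obtain ⟨c', hc0', hcd', hceq'⟩ := ih (t + 1) ht1 h hhd (by omega)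
    refine ⟨fun m => (if m = ⟨t, ht⟩ then a else 0) + c' m, fun m hm => ?_, fun ht' => ?_, ?_⟩
    · dsimp only
      rw [if_neg (by intro hcontra; rw [hcontra] at hm; exact absurd hm (lt_irrefl t)),
        hc0' m (by omega), zero_add]
    · dsimp only
      rw [if_pos rfl, hc0' ⟨t, ht⟩ (Nat.lt_succ_self t), add_zero]
    · have key : (∏ k ∈ Icc 2 (t + 1 + 1), (Polynomial.X + C (B k))) =
          (∏ k ∈ Icc 2 (t + 1), (Polynomial.X + C (B k))) * (Polynomial.X + C (B (t + 2))) := by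
        rw [Finset.prod_Icc_succ_top (by omega)]
      have split : ∀ m : Fin n, C ((if m = (⟨t, ht⟩ : Fin n) then a else 0) + c' m) *
          ∏ k ∈ Icc 2 (m.val + 1), (X + C (B k)) =
          (if m = (⟨t, ht⟩ : Fin n) then C a * ∏ k ∈ Icc 2 (m.val + 1), (X + C (B k)) else 0) +
          C (c' m) * ∏ k ∈ Icc 2 (m.val + 1), (X + C (B k)) := by
        intro m; split <;> simp [add_mul]
      simp only [split, Finset.sum_add_distrib, Finset.sum_ite_eq' Finset.univ,
        Finset.mem_univ, if_pos]
      rw [← hceq', key, hg]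
      ring

/-- Krattenthaler's determinant lemma (Lemma 3): for indeterminates
`X_1,…,X_n`, `A_2,…,A_n`, `B_2,…,B_n` in a commutative ring, the determinant of
the matrix with (i,j) entry `(X_i+B_2)⋯(X_i+B_j)·(X_i+A_{j+1})⋯(X_i+A_n)`
equals `∏_{i<j}(X_i−X_j) · ∏_{2≤i≤j≤n}(B_i−A_j)`. Indices are 1-based. -/
theorem krattenthaler_lemma3 (R : Type*) [CommRing R] (n : ℕ) (X A B : ℕ → R) :
    Matrix.det (Matrix.of fun i j : Fin n =>
      (∏ k ∈ Finset.Icc 2 (j.val + 1), (X (i.val + 1) + B k)) *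
      (∏ k ∈ Finset.Icc (j.val + 2) n, (X (i.val + 1) + A k))) =
    (∏ i : Fin n, ∏ j ∈ Finset.Ioi i, (X (i.val + 1) - X (j.val + 1))) *
    (∏ i ∈ Finset.Icc 2 n, ∏ j ∈ Finset.Icc i n, (B i - A j)) := by
  nontriviality R
  -- choose Newton coefficients for each column
  have key : ∀ j : Fin n, ∃ c : Fin n → R, (∀ m : Fin n, m.val < j.val → c m = 0) ∧
      (∀ ht : j.val < n, c ⟨j.val, ht⟩ =
        (∏ k ∈ Icc (j.val + 2) n, (Polynomial.X + C (A k))).eval (-B (j.val + 2))) ∧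
      (∏ k ∈ Icc 2 (j.val + 1), (Polynomial.X + C (B k))) *
          (∏ k ∈ Icc (j.val + 2) n, (Polynomial.X + C (A k))) =
        ∑ m : Fin n, C (c m) * ∏ k ∈ Icc 2 (m.val + 1), (Polynomial.X + C (B k)) := by
    intro j
    refine newton_expand n B (n - 1 - j.val) j.val j.isLt _ ?_ (by omega)
    refine le_trans (Polynomial.natDegree_prod_le _ _) ?_
    refine le_trans (Finset.sum_le_card_nsmul _ _ 1 fun k _ => ?_) ?_
    · refine le_trans (Polynomial.natDegree_add_le _ _) ?_
      simp [Polynomial.natDegree_X_le]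
    · have hj := j.isLt
      simp only [smul_eq_mul, mul_one, Nat.card_Icc]
      omega
  choose c hc0 hcd hceq using key
  -- the matrix factorization
  have hM : (Matrix.of fun i j : Fin n =>
      (∏ k ∈ Finset.Icc 2 (j.val + 1), (X (i.val + 1) + B k)) *
      (∏ k ∈ Finset.Icc (j.val + 2) n, (X (i.val + 1) + A k))) =
      (Matrix.of fun i m : Fin n =>
        (∏ k ∈ Icc 2 (m.val + 1), (Polynomial.X + C (B k))).eval (X (i.val + 1))) *
      (Matrix.of fun m j : Fin n => c j m) := by
    ext i j
    rw [Matrix.mul_apply]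
    simp only [Matrix.of_apply]
    have h1 := congrArg (Polynomial.eval (X (i.val + 1))) (hceq j)
    simp only [Polynomial.eval_mul, Polynomial.eval_finset_sum, Polynomial.eval_prod,
      Polynomial.eval_add, Polynomial.eval_X, Polynomial.eval_C] at h1 ⊢
    rw [h1]
    exact Finset.sum_congr rfl fun m _ => mul_comm _ _
  rw [hM, Matrix.det_mul]
  -- determinant of the evaluation matrix
  have hdeg : ∀ m : Fin n,
      (∏ k ∈ Icc 2 (m.val + 1), (Polynomial.X + C (B k))).natDegree = m.val := by
    intro m
    rw [Polynomial.natDegree_prod_of_monic _ _ fun k _ => Polynomial.monic_X_add_C _]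
    simp only [Polynomial.natDegree_X_add_C]
    rw [Finset.sum_const, smul_eq_mul, mul_one, Nat.card_Icc]
    omega
  have hW : (Matrix.of fun i m : Fin n =>
      (∏ k ∈ Icc 2 (m.val + 1), (Polynomial.X + C (B k))).eval (X (i.val + 1))).det =
      ∏ i : Fin n, ∏ j ∈ Finset.Ioi i, (X (j.val + 1) - X (i.val + 1)) := by
    rw [← Matrix.det_eval_matrixOfPolynomials_eq_det_vandermonde
      (fun i : Fin n => X (i.val + 1)) _ hdeg fun m => monic_prod_of_monic _ _
      fun k _ => Polynomial.monic_X_add_C _]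
    rw [Matrix.det_vandermonde]
  -- determinant of the triangular coefficient matrix
  have hC : (Matrix.of fun m j : Fin n => c j m).det =
      ∏ m : Fin n, ∏ k ∈ Icc (m.val + 2) n, (A k - B (m.val + 2)) := by
    rw [Matrix.det_of_lowerTriangular (Matrix.of fun m j : Fin n => c j m)
      (by intro i j hij; exact hc0 j i hij)]
    refine Finset.prod_congr rfl fun m _ => ?_
    have h2 := hcd m m.isLt
    simp only [Fin.eta] at h2
    rw [Matrix.of_apply, h2, Polynomial.eval_prod]
    refine Finset.prod_congr rfl fun k _ => ?_
    simp [neg_add_eq_sub]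
  rw [hW, hC]
  -- sign juggling
  have e1 : ∀ i : Fin n, ∏ j ∈ Finset.Ioi i, (X (j.val + 1) - X (i.val + 1)) =
      (-1 : R) ^ (n - 1 - i.val) * ∏ j ∈ Finset.Ioi i, (X (i.val + 1) - X (j.val + 1)) := by
    intro i
    rw [← Fin.card_Ioi i, Finset.pow_card_mul_prod]
    exact Finset.prod_congr rfl fun j _ => by ring
  have e2 : ∀ m : Fin n, ∏ k ∈ Icc (m.val + 2) n, (A k - B (m.val + 2)) =
      (-1 : R) ^ (n - 1 - m.val) * ∏ k ∈ Icc (m.val + 2) n, (B (m.val + 2) - A k) := by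
    intro m
    have hcard : (Icc (m.val + 2) n).card = n - 1 - m.val := by
      rw [Nat.card_Icc]; omega
    rw [← hcard, Finset.pow_card_mul_prod]
    exact Finset.prod_congr rfl fun k _ => by ring
  simp only [e1, e2]
  rw [Finset.prod_mul_distrib, Finset.prod_mul_distrib, Finset.prod_pow_eq_pow_sum]
  have hsign : ((-1 : R) ^ (∑ i : Fin n, (n - 1 - i.val)) *
      ∏ i : Fin n, ∏ j ∈ Finset.Ioi i, (X (i.val + 1) - X (j.val + 1))) *
      ((-1 : R) ^ (∑ m : Fin n, (n - 1 - m.val)) *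
      ∏ m : Fin n, ∏ k ∈ Icc (m.val + 2) n, (B (m.val + 2) - A k)) =
      (∏ i : Fin n, ∏ j ∈ Finset.Ioi i, (X (i.val + 1) - X (j.val + 1))) *
      (∏ m : Fin n, ∏ k ∈ Icc (m.val + 2) n, (B (m.val + 2) - A k)) := by
    have : (-1 : R) ^ (∑ i : Fin n, (n - 1 - i.val)) *
        (-1 : R) ^ (∑ i : Fin n, (n - 1 - i.val)) = 1 := by
      rw [← mul_pow, neg_mul_neg, one_mul, one_pow]
    calc _ = ((-1 : R) ^ (∑ i : Fin n, (n - 1 - i.val)) *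
          (-1 : R) ^ (∑ i : Fin n, (n - 1 - i.val))) *
          ((∏ i : Fin n, ∏ j ∈ Finset.Ioi i, (X (i.val + 1) - X (j.val + 1))) *
          (∏ m : Fin n, ∏ k ∈ Icc (m.val + 2) n, (B (m.val + 2) - A k))) := by ring
      _ = _ := by rw [this, one_mul]
  rw [hsign]
  congr 1
  -- reindexing the (B - A) product
  have hf : ∀ x ∈ Icc 2 (n + 1), x ∉ Icc 2 n →
      (∏ k ∈ Icc x n, (B x - A k)) = 1 := by
    intro x hx hnx
    simp only [Finset.mem_Icc] at hx hnx
    rw [Finset.Icc_eq_empty (by omega), Finset.prod_empty]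
  rw [Fin.prod_univ_eq_prod_range (fun m => ∏ k ∈ Icc (m + 2) n, (B (m + 2) - A k)) n]
  rw [Finset.prod_subset (Finset.Icc_subset_Icc_right (by omega : n ≤ n + 1)) hf]
  refine Finset.prod_nbij' (fun i => i + 2) (fun i => i - 2) ?_ ?_ ?_ ?_ ?_
  · intro a ha; simp only [Finset.mem_range] at ha; simp only [Finset.mem_Icc]; omega
  · intro a ha; simp only [Finset.mem_Icc] at ha; simp only [Finset.mem_range]; omega
  · intro a _; simp
  · intro a ha; simp only [Finset.mem_Icc] at ha; omega
  · intro a _; rfl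
end

section
/- For positive integers α, β and n, the determinant of the n×n matrix with (i,j) entry Γ(α+i+j−2)/Γ(α+β+i+j−2), multiplied by Γ(β)^n, equals ∏_{j=0}^{n−1} Γ(α+j)·Γ(β+j)·j! / Γ(α+β+n+j−1). -/
/-!
With `α = a + 1`, `β = b + 1` the entries are `(a+i+j)!/(a+b+1+i+j)!`. Subtracting
`(a+i+1)/(a+b+2+i)` times row `i` from row `i+1` turns row `i+1` into
`j(b+1)/(a+b+2+i) · (a+i+j)!/(a+b+2+i+j)!`, which vanishes in column `0`; the remaining minor is,
up to scaling rows and columns, the same matrix for `(a+1, b+1)`. Induction on `n` gives the product.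
-/

open Finset Matrix Nat

/-- `Γ(α+i+j)/Γ(α+β+i+j)` for `α = a + 1`, `β = b + 1`, with 0-based indices. -/
noncomputable def factorialHankel (n a b : ℕ) : Matrix (Fin n) (Fin n) ℝ :=
  of fun i j => ((a + i + j)! : ℝ) / (a + b + 1 + i + j)!

noncomputable def factorialHankelProd (n a b : ℕ) : ℝ :=
  ∏ j ∈ range n, ((a + j)! * (b + j)! * j ! : ℝ) / (a + b + n + j)!

lemma factorial_ratio_succ_sub (a b i j : ℕ) :
    ((a + (i + 1) + j)! : ℝ) / (a + b + 1 + (i + 1) + j)! -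
        (a + i + 1) / (a + b + 2 + i) * ((a + i + j)! / (a + b + 1 + i + j)!) =
      j * (b + 1) / (a + b + 2 + i) * ((a + i + j)! / (a + b + 2 + i + j)!) := by
  rw [show a + (i + 1) + j = a + i + j + 1 by omega,
    show a + b + 1 + (i + 1) + j = a + b + 2 + i + j by omega,
    show a + b + 2 + i + j = a + b + 1 + i + j + 1 by omega, factorial_succ, factorial_succ]
  push_cast
  field_simp
  ring

lemma factorial_mul_prod_range_add (c m : ℕ) :
    (c ! : ℝ) * ∏ i ∈ range m, ((c + 1 + i : ℕ) : ℝ) = (c + m)! := by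
  rw [← factorial_mul_ascFactorial, ascFactorial_eq_prod_range]
  push_cast
  rfl

lemma det_factorialHankel_succ (m a b : ℕ) :
    (factorialHankel (m + 1) a b).det =
      a ! * m ! * (b + 1) ^ m / (a + b + 1 + m)! * (factorialHankel m (a + 1) (b + 1)).det := by
  set H := factorialHankel (m + 1) a b
  let B : Matrix (Fin (m + 1)) (Fin (m + 1)) ℝ := of <| Fin.cons (H 0) fun i j =>
    j * (b + 1) / (a + b + 2 + i) * ((a + i + j)! / (a + b + 2 + i + j)!)
  have hHB : H.det = B.det := by
    refine det_eq_of_forall_row_eq_smul_add_pred (fun i => (a + i + 1) / (a + b + 2 + i))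
      (fun j => rfl) fun i j => ?_
    have := factorial_ratio_succ_sub a b i j
    simp only [H, B, factorialHankel, of_apply, Fin.cons_succ, Fin.val_succ, Fin.val_castSucc]
    linarith
  have hminor : B.submatrix Fin.succ Fin.succ =
      diagonal (fun i : Fin m => ((a + b + 2 + i : ℕ) : ℝ)⁻¹) * factorialHankel m (a + 1) (b + 1) *
        diagonal (fun j : Fin m => ((j + 1 : ℕ) : ℝ) * (b + 1)) := by
    ext i j
    simp only [B, factorialHankel, submatrix_apply, of_apply, Fin.cons_succ, Fin.val_succ,
      mul_diagonal, diagonal_mul]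
    rw [show a + i + (j + 1) = a + 1 + i + j by omega,
      show a + b + 2 + i + (j + 1) = a + 1 + (b + 1) + 1 + i + j by omega]
    push_cast
    ring
  have hcol : ∀ i : Fin m, B i.succ 0 = 0 := fun i => by simp [B]
  have hfac : ∏ j : Fin m, (((j + 1 : ℕ) : ℝ) * (b + 1)) = m ! * (b + 1) ^ m := by
    rw [Fin.prod_univ_eq_prod_range (fun j => ((j + 1 : ℕ) : ℝ) * (b + 1)), prod_mul_distrib,
      prod_const, card_range, ← Nat.cast_prod, prod_range_add_one_eq_factorial]
  have hasc : ((a + b + 1)! : ℝ) * ∏ i : Fin m, ((a + b + 2 + i : ℕ) : ℝ) = (a + b + 1 + m)! := by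
    rw [Fin.prod_univ_eq_prod_range (fun i => ((a + b + 2 + i : ℕ) : ℝ))]
    exact factorial_mul_prod_range_add (a + b + 1) m
  rw [hHB, det_succ_column_zero, Fin.sum_univ_succ]
  simp only [hcol, mul_zero, zero_mul, sum_const_zero, add_zero, Fin.succAbove_zero, hminor,
    det_mul, det_diagonal, hfac, prod_inv_distrib, ← hasc]
  simp [B, H, factorialHankel]
  field_simp

lemma factorialHankelProd_succ (m a b : ℕ) :
    factorialHankelProd (m + 1) a b =
      a ! * b ! * m ! / (a + b + 1 + m)! * factorialHankelProd m (a + 1) (b + 1) := by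
  have hshift (j : ℕ) : ((a + (j + 1))! * (b + (j + 1))! * (j + 1)! : ℝ) / (a + b + (m + 1) + (j + 1))! =
      (j + 1 : ℕ) * (((a + 1 + j)! * (b + 1 + j)! * j ! : ℝ) / (a + 1 + (b + 1) + m + j)!) := by
    rw [show a + (j + 1) = a + 1 + j by omega, show b + (j + 1) = b + 1 + j by omega,
      show a + b + (m + 1) + (j + 1) = a + 1 + (b + 1) + m + j by omega, factorial_succ j]
    push_cast
    ring
  rw [factorialHankelProd, prod_range_succ', prod_congr rfl fun j _ => hshift j, prod_mul_distrib,
    ← Nat.cast_prod, prod_range_add_one_eq_factorial, factorialHankelProd,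
    show a + b + (m + 1) + 0 = a + b + 1 + m by omega]
  simp only [add_zero, factorial_zero, Nat.cast_one, mul_one]
  ring

theorem factorial_pow_mul_det_factorialHankel (n a b : ℕ) :
    (b ! : ℝ) ^ n * (factorialHankel n a b).det = factorialHankelProd n a b := by
  induction n generalizing a b with
  | zero => simp [factorialHankelProd]
  | succ m ih =>
    rw [det_factorialHankel_succ, factorialHankelProd_succ, ← ih, factorial_succ b, Nat.cast_mul,
      mul_pow]
    push_cast
    ring

theorem gamma_det_eval_general (α β n : ℕ) (hα : 0 < α) (hβ : 0 < β) :
    Real.Gamma β ^ n * Matrix.det (Matrix.of fun i j : Fin n =>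
      Real.Gamma ((α + i.val + j.val : ℕ)) / Real.Gamma ((α + β + i.val + j.val : ℕ))) =
    ∏ j ∈ Finset.range n,
      Real.Gamma ((α + j : ℕ)) * Real.Gamma ((β + j : ℕ)) * (Nat.factorial j) /
        Real.Gamma ((α + β + n + j - 1 : ℕ)) := by
  obtain ⟨a, rfl⟩ := Nat.exists_eq_add_one_of_ne_zero hα.ne'
  obtain ⟨b, rfl⟩ := Nat.exists_eq_add_one_of_ne_zero hβ.ne'
  have hΓ (k : ℕ) : Real.Gamma ((k + 1 : ℕ) : ℝ) = k ! := by
    simpa using Real.Gamma_nat_eq_factorial k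
  have hH : (of fun i j : Fin n => Real.Gamma ((a + 1 + i.val + j.val : ℕ)) /
      Real.Gamma ((a + 1 + (b + 1) + i.val + j.val : ℕ))) = factorialHankel n a b := by
    ext i j
    rw [of_apply, show a + 1 + i + j = a + i + j + 1 by omega,
      show a + 1 + (b + 1) + i + j = a + b + 1 + i + j + 1 by omega, hΓ, hΓ]
    rfl
  rw [hH, hΓ, factorial_pow_mul_det_factorialHankel, factorialHankelProd]
  refine prod_congr rfl fun j _ => ?_
  rw [show a + 1 + j = a + j + 1 by omega, show b + 1 + j = b + j + 1 by omega,
    show a + 1 + (b + 1) + n + j - 1 = a + b + n + j + 1 by omega, hΓ, hΓ, hΓ]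

/-- For positive integers α, β, n,
`Γ(β)^n · det(Γ(α+i+j−2)/Γ(α+β+i+j−2)) = ∏_{j=0}^{n−1} Γ(α+j)Γ(β+j)j!/Γ(α+β+n+j−1)`
(1-based indices i, j). -/
theorem gamma_det_eval (α β n : ℕ) (hα : 0 < α) (hβ : 0 < β) (hn : 0 < n) :
    Real.Gamma β ^ n * Matrix.det (Matrix.of fun i j : Fin n =>
      Real.Gamma ((α + i.val + j.val : ℕ)) / Real.Gamma ((α + β + i.val + j.val : ℕ))) =
    ∏ j ∈ Finset.range n,
      Real.Gamma ((α + j : ℕ)) * Real.Gamma ((β + j : ℕ)) * (Nat.factorial j) /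
        Real.Gamma ((α + β + n + j - 1 : ℕ)) :=
  gamma_det_eval_general α β n hα hβ
end

section
/- For positive integers α, β and n, we have ∏_{i=1}^n d_{α+β+n+i−3} · (n−i)!·(β+i−2)!/(α+i−1)_{β+n−1} ≥ 1, where d_m = lcm(1,...,m). -/
/-- `d_m` denotes `lcm(1,…,m)`. -/
def dlcm (m : ℕ) : ℕ := (Finset.Icc 1 m).lcm id

/-!
The numbers `b! / (y)_{b+1}` are the beta integrals `B(y, b+1)`; with `α = a+1`,
`β = b+1` the product in the statement is `∏ᵢ d_{a+b+n+i}` times the determinant of the Hankel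
matrix `(B(a+i+j+1, b+1))ᵢⱼ`. Expanding `(1-t)^b` in the integral gives
`B(y, b+1) = ∑ₖ (-1)^k C(b,k) / (y+k)`, so `d_{a+b+n+i}` clears the denominators of row `i`: the
rescaled determinant is a positive integer, hence at least `1`.

To evaluate the determinant, multiply row `i` by `(a+i+1)_{b+n} / b!`; entry `(i, j)` becomes
`q_j(a+i)` for a polynomial `q_j` of degree `n-1`, a product of two rising factorials. For
polynomials of degree `< n` the ratio `det (q_j(x_i)) / V(x)` does not depend on the nodes `x`,
and at the nodes `x_i = -(b+1+i)` the matrix `(q_j(x_i))` is upper triangular.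
-/

open Finset Polynomial Matrix Nat

theorem sum_range_succ_neg_one_pow_mul_choose_succ {R : Type*} [CommRing R] (b : ℕ) (f : ℕ → R) :
    ∑ k ∈ range (b + 2), (-1) ^ k * ((b + 1).choose k : R) * f k =
      ∑ k ∈ range (b + 1), (-1) ^ k * (b.choose k : R) * (f k - f (k + 1)) := by
  have hlast : ∑ k ∈ range (b + 2), (-1) ^ k * (b.choose k : R) * f k =
      ∑ k ∈ range (b + 1), (-1) ^ k * (b.choose k : R) * f k := by
    simp [sum_range_succ _ (b + 1)]
  rw [sum_range_succ'] at hlast ⊢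
  simp only [Nat.choose_succ_succ', Nat.cast_add, mul_sub, sum_sub_distrib, pow_succ, add_mul,
    mul_add, sum_add_distrib, mul_neg_one, neg_mul, sum_neg_distrib,
    Nat.choose_zero_right] at hlast ⊢
  linear_combination hlast

theorem sum_range_neg_one_pow_mul_choose_div {K : Type*} [Field K] (b : ℕ) (x : K)
    (hx : (ascPochhammer K (b + 1)).eval x ≠ 0) :
    ∑ k ∈ range (b + 1), (-1) ^ k * (b.choose k : K) / (x + k) =
      b ! / (ascPochhammer K (b + 1)).eval x := by
  induction b generalizing x with
  | zero => simp
  | succ b ih =>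
    have hleft : (ascPochhammer K (b + 1 + 1)).eval x =
        x * (ascPochhammer K (b + 1)).eval (x + 1) := by
      rw [ascPochhammer_succ_left, eval_mul, eval_X, eval_comp, eval_add, eval_X, eval_one]
    have hright : (ascPochhammer K (b + 1 + 1)).eval x =
        (ascPochhammer K (b + 1)).eval x * (x + b + 1) := by
      rw [ascPochhammer_succ_eval]; push_cast; ring
    have hP₁ : (ascPochhammer K (b + 1)).eval (x + 1) ≠ 0 := right_ne_zero_of_mul (hleft ▸ hx)
    have hP : (ascPochhammer K (b + 1)).eval x ≠ 0 := left_ne_zero_of_mul (hright ▸ hx)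
    have hxb : x + b + 1 ≠ 0 := right_ne_zero_of_mul (hright ▸ hx)
    have hpascal := sum_range_succ_neg_one_pow_mul_choose_succ b (fun k => (x + k)⁻¹)
    simp only [← div_eq_mul_inv, mul_sub, sum_sub_distrib, Nat.cast_succ, ← add_assoc,
      add_right_comm x _ (1 : K)] at hpascal
    rw [hpascal, ih x hP, ih (x + 1) hP₁, hright, Nat.factorial_succ]
    field_simp
    push_cast
    linear_combination (b ! : K) * (hleft.symm.trans hright)

theorem Matrix.of_eval_eq_vandermonde_mul {R : Type*} [CommRing R] {n : ℕ} (p : Fin n → R[X])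
    (hp : ∀ j, (p j).natDegree < n) (v : Fin n → R) :
    of (fun i j => (p j).eval (v i)) = vandermonde v * of (fun i j : Fin n => (p j).coeff i) := by
  ext i j
  rw [mul_apply, of_apply, eval_eq_sum_range' (hp j), ← Fin.sum_univ_eq_sum_range]
  exact sum_congr rfl fun k _ => by rw [vandermonde_apply, of_apply, mul_comm]

theorem Matrix.det_of_eval_mul_det_vandermonde_comm {R : Type*} [CommRing R] {n : ℕ}
    (p : Fin n → R[X]) (hp : ∀ j, (p j).natDegree < n) (v w : Fin n → R) :
    (of fun i j => (p j).eval (v i)).det * (vandermonde w).det =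
      (of fun i j => (p j).eval (w i)).det * (vandermonde v).det := by
  simp only [of_eval_eq_vandermonde_mul p hp, det_mul]
  ring

theorem Matrix.det_vandermonde_neg {R : Type*} [CommRing R] {n : ℕ} (v : Fin n → R) :
    (vandermonde fun i => -v i).det = (∏ i : Fin n, (-1) ^ (i : ℕ)) * (vandermonde v).det := by
  rw [← det_mul_row]
  congr 1
  ext i j
  rw [of_apply, vandermonde_apply, vandermonde_apply, neg_pow]

noncomputable def betaHankelPoly (n b j : ℕ) : ℚ[X] :=
  (ascPochhammer ℚ j).comp (X + C 1) *
    (ascPochhammer ℚ (n - 1 - j)).comp (X + C ((j + b + 2 : ℕ) : ℚ))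

theorem natDegree_betaHankelPoly_lt {n j : ℕ} (b : ℕ) (hj : j < n) :
    (betaHankelPoly n b j).natDegree < n := by
  refine (natDegree_mul_le).trans_lt ?_
  simp only [natDegree_comp, ascPochhammer_natDegree, natDegree_X_add_C]
  omega

theorem eval_betaHankelPoly (n b j : ℕ) (t : ℚ) :
    (betaHankelPoly n b j).eval t =
      (ascPochhammer ℚ j).eval (t + 1) *
        (ascPochhammer ℚ (n - 1 - j)).eval (t + (j + b + 2 : ℕ)) := by
  simp [betaHankelPoly]

theorem eval_betaHankelPoly_natCast (n b j t : ℕ) :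
    (betaHankelPoly n b j).eval (t : ℚ) =
      ((t + 1).ascFactorial j * (t + j + b + 2).ascFactorial (n - 1 - j) : ℕ) := by
  rw [eval_betaHankelPoly]
  push_cast [cast_ascFactorial]
  ring_nf

theorem eval_betaHankelPoly_neg_of_lt {n b i j : ℕ} (hji : j < i) (hi : i < n) :
    (betaHankelPoly n b j).eval (-(i : ℚ) - (b + 1)) = 0 := by
  have hshift : -(i : ℚ) - (b + 1) + (j + b + 2 : ℕ) = -((i - j - 1 : ℕ) : ℚ) := by
    rw [Nat.cast_sub (by omega), Nat.cast_sub hji.le]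
    push_cast
    ring
  rw [eval_betaHankelPoly, hshift, ascPochhammer_eval_neg_coe_nat_of_lt (by omega), mul_zero]

theorem eval_betaHankelPoly_neg_self (n b i : ℕ) :
    (betaHankelPoly n b i).eval (-(i : ℚ) - (b + 1)) =
      (-1) ^ i * ((b + i).descFactorial i * (n - 1 - i)! : ℕ) := by
  rw [eval_betaHankelPoly, show -(i : ℚ) - (b + 1) + 1 = -((b + i : ℕ) : ℚ) by push_cast; ring,
    show -(i : ℚ) - (b + 1) + (i + b + 2 : ℕ) = 1 by push_cast; ring,
    ascPochhammer_eval_neg_eq_descPochhammer, descPochhammer_eval_eq_descFactorial,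
    ascPochhammer_eval_one]
  push_cast
  ring

theorem det_eval_betaHankelPoly_neg (n b : ℕ) :
    (of fun i j : Fin n => (betaHankelPoly n b j).eval (-(i : ℚ) - (b + 1))).det =
      (∏ i : Fin n, (-1) ^ (i : ℕ)) *
        ∏ i : Fin n, (((b + i).descFactorial i * (n - 1 - i)! : ℕ) : ℚ) := by
  rw [det_of_isUpperTriangular, ← prod_mul_distrib]
  · exact prod_congr rfl fun i _ => eval_betaHankelPoly_neg_self n b i
  · exact fun i j hji => eval_betaHankelPoly_neg_of_lt hji i.isLt

theorem det_eval_betaHankelPoly (a b n : ℕ) :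
    (of fun i j : Fin n => (betaHankelPoly n b j).eval ((i : ℚ) + a)).det =
      ∏ i : Fin n, (((b + i).descFactorial i * (n - 1 - i)! : ℕ) : ℚ) := by
  have hcomm := det_of_eval_mul_det_vandermonde_comm _
    (fun j : Fin n => natDegree_betaHankelPoly_lt b j.isLt) (fun i => (i : ℚ) + a)
    (fun i => -(i : ℚ) - (b + 1))
  rw [det_vandermonde_add, det_vandermonde_sub, det_vandermonde_neg, det_eval_betaHankelPoly_neg,
    mul_assoc] at hcomm
  have hV : (vandermonde fun i : Fin n => (i : ℚ)).det ≠ 0 :=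
    det_vandermonde_ne_zero_iff.mpr fun i j h => Fin.ext (by exact_mod_cast h)
  have hsign : ∏ i : Fin n, (-1 : ℚ) ^ (i : ℕ) ≠ 0 := prod_ne_zero_iff.mpr fun i _ => by simp
  rw [mul_left_comm] at hcomm
  exact mul_right_cancel₀ hV (mul_left_cancel₀ hsign hcomm)

noncomputable def betaHankel (a b n : ℕ) : Matrix (Fin n) (Fin n) ℚ :=
  of fun i j => (b ! : ℚ) / ((a + i + j + 1).ascFactorial (b + 1) : ℕ)

theorem betaHankel_apply_eq_mul_eval (a b n : ℕ) (i j : Fin n) :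
    betaHankel a b n i j =
      (b ! / ((a + i + 1).ascFactorial (b + n) : ℕ) : ℚ) *
        (betaHankelPoly n b j).eval ((i : ℚ) + a) := by
  have hsplit : (a + i + 1).ascFactorial (b + n) = (a + i + 1).ascFactorial j *
      (a + i + j + 1).ascFactorial (b + 1) * (a + i + j + b + 2).ascFactorial (n - 1 - j) := by
    rw [show b + n = j + (b + 1) + (n - 1 - j) by omega, ← ascFactorial_mul_ascFactorial,
      ← ascFactorial_mul_ascFactorial]
    ring_nf
  rw [show (i : ℚ) + a = ((a + i : ℕ) : ℚ) by push_cast; ring, eval_betaHankelPoly_natCast, hsplit,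
    betaHankel, of_apply]
  have := ascFactorial_pos (a + i) j
  have := ascFactorial_pos (a + i + j) (b + 1)
  have := ascFactorial_pos (a + i + j + b + 1) (n - 1 - j)
  push_cast
  field_simp

theorem det_betaHankel (a b n : ℕ) :
    (betaHankel a b n).det =
      ∏ i : Fin n, ((b + i)! * (n - 1 - i)! : ℚ) / ((a + i + 1).ascFactorial (b + n) : ℕ) := by
  have hrow : betaHankel a b n = of fun i j : Fin n =>
      (b ! / ((a + i + 1).ascFactorial (b + n) : ℕ) : ℚ) *
        of (fun i j : Fin n => (betaHankelPoly n b j).eval ((i : ℚ) + a)) i j :=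
    ext fun i j => betaHankel_apply_eq_mul_eval a b n i j
  rw [hrow, det_mul_column, det_eval_betaHankelPoly, ← prod_mul_distrib]
  refine prod_congr rfl fun i _ => ?_
  rw [← factorial_mul_descFactorial (le_add_left (i : ℕ) b), Nat.add_sub_cancel]
  push_cast
  ring

theorem dvd_dlcm {k m : ℕ} (hk : 0 < k) (hkm : k ≤ m) : k ∣ dlcm m :=
  dvd_lcm (mem_Icc.mpr ⟨hk, hkm⟩)

theorem dlcm_pos (m : ℕ) : 0 < dlcm m :=
  Nat.pos_of_ne_zero <| lcm_ne_zero_iff.mpr fun _ hk => Nat.one_le_iff_ne_zero.mp (mem_Icc.mp hk).1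

theorem exists_intCast_eq_dlcm_mul_factorial_div_ascFactorial {x b m : ℕ} (hx : 0 < x)
    (hm : x + b ≤ m) : ∃ z : ℤ, (dlcm m : ℚ) * (b ! / (x.ascFactorial (b + 1) : ℕ)) = z := by
  have hP : (ascPochhammer ℚ (b + 1)).eval (x : ℚ) ≠ 0 := by
    rw [← cast_ascFactorial]
    exact_mod_cast (Nat.sub_add_cancel hx ▸ ascFactorial_pos (x - 1) (b + 1)).ne'
  refine ⟨∑ k ∈ range (b + 1), (-1) ^ k * b.choose k * (dlcm m / (x + k) : ℕ), ?_⟩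
  rw [cast_ascFactorial, ← sum_range_neg_one_pow_mul_choose_div b _ hP, mul_sum]
  simp only [Int.cast_sum, Int.cast_mul, Int.cast_pow, Int.cast_neg, Int.cast_one, Int.cast_natCast]
  refine sum_congr rfl fun k hk => ?_
  rw [Nat.cast_div (dvd_dlcm (by omega) (by have := mem_range.mp hk; omega)) (by positivity)]
  push_cast
  ring

theorem Matrix.exists_intCast_det_eq {ι R : Type*} [Fintype ι] [DecidableEq ι] [CommRing R]
    {M : Matrix ι ι R} (hM : ∀ i j, ∃ z : ℤ, M i j = z) : ∃ z : ℤ, M.det = z := by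
  choose N hN using hM
  refine ⟨(of N).det, ?_⟩
  rw [Int.cast_det]
  congr
  ext i j
  exact hN i j

noncomputable def dlcmBetaHankel (a b n : ℕ) : Matrix (Fin n) (Fin n) ℚ :=
  of fun i j => (dlcm (a + b + n + i) : ℚ) * betaHankel a b n i j

theorem det_dlcmBetaHankel (a b n : ℕ) :
    (dlcmBetaHankel a b n).det = ∏ i : Fin n, (dlcm (a + b + n + i) : ℚ) *
      ((b + i)! * (n - 1 - i)! / ((a + i + 1).ascFactorial (b + n) : ℕ)) := by
  rw [dlcmBetaHankel, det_mul_column, det_betaHankel, prod_mul_distrib]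

theorem det_dlcmBetaHankel_pos (a b n : ℕ) : 0 < (dlcmBetaHankel a b n).det := by
  rw [det_dlcmBetaHankel]
  refine prod_pos fun i _ => ?_
  have := dlcm_pos (a + b + n + i)
  have := ascFactorial_pos (a + i) (b + n)
  positivity

theorem exists_intCast_eq_det_dlcmBetaHankel (a b n : ℕ) :
    ∃ z : ℤ, (dlcmBetaHankel a b n).det = z :=
  exists_intCast_det_eq fun i j =>
    exists_intCast_eq_dlcm_mul_factorial_div_ascFactorial (Nat.succ_pos _) (by omega)

theorem prod_Icc_one_eq_prod_fin {M : Type*} [CommMonoid M] (f : ℕ → M) (n : ℕ) :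
    ∏ i ∈ Icc 1 n, f i = ∏ i : Fin n, f (i + 1) := by
  rw [Fin.prod_univ_eq_prod_range (fun i => f (i + 1)), ← Ico_add_one_right_eq_Icc,
    prod_Ico_eq_prod_range, Nat.add_sub_cancel]
  exact prod_congr rfl fun i _ => by rw [add_comm]

theorem improved_extrapolation_general (α β n : ℕ) (hα : 0 < α) (hβ : 0 < β) :
    1 ≤ ∏ i ∈ Finset.Icc 1 n,
        (dlcm (α + β + n + i - 3) : ℚ) *
          (((n - i).factorial : ℚ) * ((β + i - 2).factorial : ℚ) /
            (Nat.ascFactorial (α + i - 1) (β + n - 1) : ℚ)) := by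
  obtain ⟨a, rfl⟩ : ∃ a, α = a + 1 := ⟨α - 1, by omega⟩
  obtain ⟨b, rfl⟩ : ∃ b, β = b + 1 := ⟨β - 1, by omega⟩
  obtain ⟨z, hz⟩ := exists_intCast_eq_det_dlcmBetaHankel a b n
  have hpos := det_dlcmBetaHankel_pos a b n
  rw [hz, Int.cast_pos] at hpos
  calc (1 : ℚ) ≤ z := by exact_mod_cast hpos
    _ = (dlcmBetaHankel a b n).det := hz.symm
    _ = _ := by
      rw [det_dlcmBetaHankel, prod_Icc_one_eq_prod_fin]
      refine prod_congr rfl fun i _ => ?_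
      rw [show a + 1 + (b + 1) + n + (i + 1) - 3 = a + b + n + i by omega,
        show n - (i + 1) = n - 1 - i by omega, show b + 1 + (i + 1) - 2 = b + i by omega,
        show a + 1 + (i + 1) - 1 = a + i + 1 by omega, show b + 1 + n - 1 = b + n by omega,
        mul_comm ((n - 1 - i)! : ℚ)]

/-- For positive integers α, β, n,
`∏_{i=1}^n d_{α+β+n+i−3}·(n−i)!·(β+i−2)!/(α+i−1)_{β+n−1} ≥ 1`. -/
theorem improved_extrapolation (α β n : ℕ) (hα : 0 < α) (hβ : 0 < β) (hn : 0 < n) :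
    1 ≤ ∏ i ∈ Finset.Icc 1 n,
        (dlcm (α + β + n + i - 3) : ℚ) *
          (((n - i).factorial : ℚ) * ((β + i - 2).factorial : ℚ) /
            (Nat.ascFactorial (α + i - 1) (β + n - 1) : ℚ)) :=
  improved_extrapolation_general α β n hα hβ
end

section
/- Let s > 0 be fixed and for each positive integer n set α = β = ⌊sn⌋. Let Δ_n(s) = ∏_{j=0}^{n−1} (α+j−1)!·(β+j−1)!·j!/(α+β+n+j−2)!. Then as n → ∞, log Δ_n(s) = ( ((2s+1)²/2)·log(2s+1) − s²·log s − (s+1)²·log(s+1) − 2(s+1)²·log 2 )·n² + O(n log n). -/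
/-!
`Δ_n(s)` is a ratio of five superfactorials `1!⋯N!` whose arguments `N` lie within 5 of
`n, sn, (s+1)n, (2s+1)n, (2s+2)n`. Comparing sums with integrals twice (for `log k!`
and then for `∑ (k log k - k)`) gives `log (1!⋯N!) = F N + O(N log N)` with
`F x = x²/2 · log x - 3x²/4`, and `F` is `R (log R + 1)`-Lipschitz on `[1, R]`, so every `N` may
be replaced by the corresponding real multiple of `n` at a cost `O(n log n)`. Since
`F (c x) = c² F x + c² x²/2 · log c` and `2(s+1)² - 2s² + 1 - (2s+2)² + (2s+1)² = 0`, the `F n`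
terms cancel and the `log c` terms leave the stated coefficient of `n²`.
-/

open Real Finset
open scoped Nat

/-- With `α = β = ⌊sn⌋`, `Δ_n(s) = ∏_{j=0}^{n−1} (α+j−1)!·(β+j−1)!·j!/(α+β+n+j−2)!`. -/
noncomputable def Δ (s : ℝ) (n : ℕ) : ℝ :=
  ∏ j ∈ Finset.range n,
    ((⌊s * n⌋₊ + j - 1).factorial : ℝ) * ((⌊s * n⌋₊ + j - 1).factorial : ℝ) *
      (j.factorial : ℝ) / ((⌊s * n⌋₊ + ⌊s * n⌋₊ + n + j - 2).factorial : ℝ)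

theorem MonotoneOn.abs_sum_Ico_sub_integral_le {f : ℝ → ℝ} {a b : ℕ} (hab : a ≤ b)
    (hf : MonotoneOn f (Set.Icc a b)) :
    |∑ i ∈ Ico a b, f i - ∫ x in (a : ℝ)..b, f x| ≤ f b - f a := by
  have hlower := hf.sum_le_integral_Ico hab
  have hupper := hf.integral_le_sum_Ico hab
  have htelescope := sum_Ico_sub (fun i : ℕ ↦ f i) hab
  simp only [Nat.cast_add_one, sum_sub_distrib] at htelescope hupper
  rw [abs_le]
  constructor <;> linarith

theorem log_factorial_eq_sum (k : ℕ) :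
    log (k ! : ℝ) = ∑ i ∈ Ico 1 (k + 1), log (i : ℝ) := by
  rw [← prod_Ico_id_eq_factorial, Nat.cast_prod, log_prod]
  intro i hi
  exact Nat.cast_ne_zero.mpr (Nat.one_le_iff_ne_zero.mp (mem_Ico.mp hi).1)

theorem abs_log_factorial_sub_le (k : ℕ) :
    |log (k ! : ℝ) - (k * log k - k)| ≤ 2 * log k + 1 := by
  rcases Nat.eq_zero_or_pos k with rfl | hk
  · simp
  have hmono : MonotoneOn log (Set.Icc ((1 : ℕ) : ℝ) k) := fun x hx _ _ hxy ↦
    log_le_log (by linarith [Nat.cast_one (R := ℝ) ▸ hx.1]) hxy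
  have hcompare := hmono.abs_sum_Ico_sub_integral_le hk
  rw [integral_log] at hcompare
  have hsum : log (k ! : ℝ) = ∑ i ∈ Ico 1 k, log (i : ℝ) + log k := by
    rw [log_factorial_eq_sum, sum_Ico_succ_top hk]
  simp only [Nat.cast_one, log_one, mul_zero, sub_zero] at hcompare
  rw [hsum]
  rw [abs_le] at hcompare ⊢
  constructor <;> linarith [hcompare.1, hcompare.2]

noncomputable def logSuperFactorialApprox (x : ℝ) : ℝ := x ^ 2 / 2 * log x - 3 / 4 * x ^ 2

theorem hasDerivAt_logSuperFactorialApprox {x : ℝ} (hx : x ≠ 0) :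
    HasDerivAt logSuperFactorialApprox (x * log x - x) x := by
  have h := (((hasDerivAt_pow 2 x).div_const 2).mul (hasDerivAt_log hx)).sub
    ((hasDerivAt_pow 2 x).const_mul (3 / 4))
  refine h.congr_deriv ?_
  field_simp
  ring

theorem monotoneOn_mul_log_sub_self :
    MonotoneOn (fun x : ℝ ↦ x * log x - x) (Set.Ici 1) := by
  intro x (hx : 1 ≤ x) y (hy : 1 ≤ y) hxy
  have hratio : 1 - x / y ≤ log y - log x := by
    rw [← log_div (by positivity) (by positivity)]
    simpa using one_sub_inv_le_log_of_pos (show 0 < y / x by positivity)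
  have hlogx : 0 ≤ log x := log_nonneg hx
  have hcancel : y * (1 - x / y) = y - x := by field_simp
  dsimp only
  nlinarith [mul_le_mul_of_nonneg_left hratio (show 0 ≤ y by linarith),
    mul_nonneg (sub_nonneg.mpr hxy) hlogx]

theorem integral_mul_log_sub_self {a b : ℝ} (ha : 0 < a) (hb : 0 < b) :
    ∫ x in a..b, (x * log x - x) = logSuperFactorialApprox b - logSuperFactorialApprox a := by
  have hpos : ∀ x ∈ Set.uIcc a b, x ≠ 0 := fun x hx ↦
    (lt_of_lt_of_le (lt_min ha hb) hx.1).ne'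
  refine intervalIntegral.integral_eq_sub_of_hasDerivAt
    (fun x hx ↦ hasDerivAt_logSuperFactorialApprox (hpos x hx)) ?_
  exact (continuous_mul_log.sub continuous_id).intervalIntegrable _ _

theorem log_superFactorial_eq_sum (N : ℕ) :
    log (N.superFactorial : ℝ) = ∑ k ∈ Icc 1 N, log (k ! : ℝ) := by
  rw [← Nat.prod_Icc_factorial, Nat.cast_prod, log_prod]
  intro k _
  positivity

theorem Nat.superFactorial_pos (n : ℕ) : 0 < n.superFactorial := by
  rw [← Nat.prod_Icc_factorial]
  exact prod_pos fun k _ ↦ k.factorial_pos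

theorem sum_range_log_factorial (n : ℕ) :
    ∑ j ∈ range (n + 1), log (j ! : ℝ) = log (n.superFactorial : ℝ) := by
  rw [← Nat.prod_range_succ_factorial, Nat.cast_prod, log_prod]
  intro j _
  positivity

theorem sum_range_log_factorial_add (a n : ℕ) :
    ∑ j ∈ range n, log ((a + 1 + j) ! : ℝ) =
      log ((a + n).superFactorial : ℝ) - log (a.superFactorial : ℝ) := by
  have hsf : (a + n).superFactorial = a.superFactorial * ∏ j ∈ range n, (a + 1 + j) ! := by
    rw [← Nat.prod_range_succ_factorial, ← Nat.prod_range_succ_factorial,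
      show a + n + 1 = a + 1 + n by ring, prod_range_add]
  have hpos := Nat.cast_pos (α := ℝ) |>.mpr a.superFactorial_pos
  rw [hsf, Nat.cast_mul, Nat.cast_prod, log_mul hpos.ne' (by positivity),
    log_prod (fun j _ ↦ by positivity)]
  ring

theorem abs_log_superFactorial_sub_le (N : ℕ) :
    |log (N.superFactorial : ℝ) - logSuperFactorialApprox N| ≤ 4 * N * (log N + 1) := by
  rcases Nat.eq_zero_or_pos N with rfl | hN
  · simp [logSuperFactorialApprox]
  replace hN : 1 ≤ N := hN
  have hN' : (1 : ℝ) ≤ N := by exact_mod_cast hN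
  set g : ℝ → ℝ := fun x ↦ x * log x - x with hg
  have hfactorial : |∑ k ∈ Icc 1 N, (log (k ! : ℝ) - g k)| ≤ N * (2 * log N + 1) := by
    calc |∑ k ∈ Icc 1 N, (log (k ! : ℝ) - g k)|
        ≤ ∑ k ∈ Icc 1 N, |log (k ! : ℝ) - g k| := abs_sum_le_sum_abs _ _
      _ ≤ ∑ _k ∈ Icc 1 N, (2 * log N + 1) := by
          refine sum_le_sum fun k hk ↦ (abs_log_factorial_sub_le k).trans ?_
          have hk := mem_Icc.mp hk
          gcongr
          · exact_mod_cast hk.1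
          · exact_mod_cast hk.2
      _ = N * (2 * log N + 1) := by
        rw [sum_const, Nat.card_Icc, add_tsub_cancel_right, nsmul_eq_mul]
  have hmono : MonotoneOn g (Set.Icc ((1 : ℕ) : ℝ) N) :=
    monotoneOn_mul_log_sub_self.mono fun x hx ↦ by simpa using hx.1
  have hcompare := hmono.abs_sum_Ico_sub_integral_le hN
  rw [integral_mul_log_sub_self (by norm_num) (by positivity)] at hcompare
  have hsplit : log (N.superFactorial : ℝ) - logSuperFactorialApprox N
      = ∑ k ∈ Icc 1 N, (log (k ! : ℝ) - g k)
        + (∑ k ∈ Ico 1 N, g k - (logSuperFactorialApprox N - logSuperFactorialApprox 1))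
        + g N + 3 / 4 := by
    rw [log_superFactorial_eq_sum, sum_sub_distrib, ← Ico_add_one_right_eq_Icc,
      sum_Ico_succ_top hN (fun k : ℕ ↦ g k), show logSuperFactorialApprox 1 = -3 / 4 by
        norm_num [logSuperFactorialApprox]]
    ring
  simp only [hg, Nat.cast_one, log_one, mul_zero, zero_sub] at hcompare
  rw [hsplit]
  rw [abs_le] at hcompare hfactorial ⊢
  constructor <;> nlinarith [hcompare.1, hcompare.2, hfactorial.1, hfactorial.2]

theorem abs_logSuperFactorialApprox_sub_le {R a b : ℝ} (ha : a ∈ Set.Icc 1 R)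
    (hb : b ∈ Set.Icc 1 R) :
    |logSuperFactorialApprox b - logSuperFactorialApprox a| ≤ R * (log R + 1) * |b - a| := by
  have hderiv_le : ∀ x ∈ Set.Icc 1 R, ‖x * log x - x‖ ≤ R * (log R + 1) := by
    intro x ⟨hx1, hxR⟩
    have hlogx : 0 ≤ log x := log_nonneg hx1
    have hlog : log x ≤ log R := log_le_log (by linarith) hxR
    rw [norm_eq_abs, abs_le]
    constructor <;> nlinarith
  simpa only [norm_eq_abs] using (convex_Icc 1 R).norm_image_sub_le_of_norm_hasDerivWithin_le
    (fun x hx ↦ (hasDerivAt_logSuperFactorialApprox (by linarith [hx.1])).hasDerivWithinAt)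
    hderiv_le ha hb

theorem mul_log_add_one_le_mul_log_add_one {a b : ℝ} (ha : 1 ≤ a) (hab : a ≤ b) :
    a * (log a + 1) ≤ b * (log b + 1) := by
  have := log_nonneg ha
  gcongr
  linarith

theorem mul_log_mul_add_one_le {c x : ℝ} (hc : 1 ≤ c) (hcx : c ≤ x) (hx : exp 1 ≤ x) :
    c * x * (log (c * x) + 1) ≤ 3 * c * (x * log x) := by
  have hx0 : 0 < x := (exp_pos 1).trans_le hx
  have hlogx : 1 ≤ log x := by rwa [le_log_iff_exp_le hx0]
  have hlogc : log c ≤ log x := log_le_log (by linarith) hcx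
  rw [log_mul (by linarith) hx0.ne']
  have hcx0 : 0 ≤ c * x := by positivity
  nlinarith

theorem abs_log_superFactorial_sub_approx_le {N : ℕ} {u R d : ℝ}
    (hN : (N : ℝ) ∈ Set.Icc 1 R) (hu : u ∈ Set.Icc 1 R) (hd : |(N : ℝ) - u| ≤ d) :
    |log (N.superFactorial : ℝ) - logSuperFactorialApprox u| ≤
      (4 + d) * (R * (log R + 1)) := by
  have hR : 0 ≤ R * (log R + 1) := by
    have := log_nonneg (hN.1.trans hN.2)
    nlinarith [hN.1.trans hN.2]
  have hsf : |log (N.superFactorial : ℝ) - logSuperFactorialApprox N| ≤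
      4 * (R * (log R + 1)) := by
    refine (abs_log_superFactorial_sub_le N).trans ?_
    linarith [mul_log_add_one_le_mul_log_add_one hN.1 hN.2]
  have happrox : |logSuperFactorialApprox N - logSuperFactorialApprox u| ≤
      d * (R * (log R + 1)) := by
    rw [abs_sub_comm, mul_comm]
    exact (abs_logSuperFactorialApprox_sub_le hN hu).trans (by rw [abs_sub_comm]; gcongr)
  calc _ ≤ _ := abs_sub_le _ _ _
    _ ≤ _ := add_le_add hsf happrox
    _ = _ := by ring

noncomputable def deltaLeadingCoeff (s : ℝ) : ℝ :=
  ((2 * s + 1) ^ 2 / 2) * log (2 * s + 1) - s ^ 2 * log s - (s + 1) ^ 2 * log (s + 1) -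
    2 * (s + 1) ^ 2 * log 2

theorem logSuperFactorialApprox_combination {s x : ℝ} (hs : 0 < s) (hx : 0 < x) :
    2 * logSuperFactorialApprox ((s + 1) * x) - 2 * logSuperFactorialApprox (s * x)
      + logSuperFactorialApprox x - logSuperFactorialApprox ((2 * s + 2) * x)
      + logSuperFactorialApprox ((2 * s + 1) * x) = deltaLeadingCoeff s * x ^ 2 := by
  have h2 : (2 * s + 2) * x = 2 * ((s + 1) * x) := by ring
  simp only [logSuperFactorialApprox, deltaLeadingCoeff, h2]
  rw [log_mul two_ne_zero (by positivity), log_mul (by positivity) hx.ne',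
    log_mul hs.ne' hx.ne', log_mul (by positivity) hx.ne']
  ring

/- Writing `⌊s * n⌋₊ = p + 2` and `n = q + 1` keeps every index free of truncated
subtraction. -/
theorem log_Δ_eq {s : ℝ} {n p q : ℕ} (hn : n = q + 1) (hm : ⌊s * n⌋₊ = p + 2) :
    log (Δ s n) = log (q.superFactorial : ℝ)
      + 2 * (log ((p + q + 1).superFactorial : ℝ) - log (p.superFactorial : ℝ))
      - (log ((2 * p + 2 * q + 3).superFactorial : ℝ)
        - log ((2 * p + q + 2).superFactorial : ℝ)) := by
  have hterm : ∀ j ∈ range (q + 1),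
      log (((p + 2 + j - 1) ! : ℝ) * ((p + 2 + j - 1) ! : ℝ) * (j ! : ℝ)
        / ((p + 2 + (p + 2) + (q + 1) + j - 2) ! : ℝ))
      = 2 * log ((p + 1 + j) ! : ℝ) + log (j ! : ℝ) - log ((2 * p + q + 2 + 1 + j) ! : ℝ) := by
    intro j _
    rw [show p + 2 + j - 1 = p + 1 + j by omega,
      show p + 2 + (p + 2) + (q + 1) + j - 2 = 2 * p + q + 2 + 1 + j by omega,
      log_div (by positivity) (by positivity), log_mul (by positivity) (by positivity),
      log_mul (by positivity) (by positivity)]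
    ring
  subst hn
  rw [Δ, hm, log_prod (fun j _ ↦ by positivity), sum_congr rfl hterm, sum_sub_distrib,
    sum_add_distrib, ← mul_sum, sum_range_log_factorial_add, sum_range_log_factorial_add,
    sum_range_log_factorial]
  ring_nf

theorem abs_log_Δ_sub_le {s : ℝ} (hs : 0 < s) {n : ℕ} (hn : 2 ≤ n) (hsn : 3 ≤ s * n) :
    |log (Δ s n) - deltaLeadingCoeff s * n ^ 2| ≤
      63 * ((2 * s + 2) * n * (log ((2 * s + 2) * n) + 1)) := by
  set R := (2 * s + 2) * (n : ℝ)
  set m := ⌊s * n⌋₊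
  have hm_le : (m : ℝ) ≤ s * n := Nat.floor_le (by positivity)
  have hm_gt : s * n < m + 1 := Nat.lt_floor_add_one _
  have hm3 : 3 ≤ m := by exact_mod_cast (by linarith : (2 : ℝ) < m)
  have hm3' : (3 : ℝ) ≤ m := by exact_mod_cast hm3
  have hn' : (2 : ℝ) ≤ n := by exact_mod_cast hn
  have hq : ((n - 1 : ℕ) : ℝ) = n - 1 := by push_cast [Nat.cast_sub (by omega : 1 ≤ n)]; ring
  have hp : ((m - 2 : ℕ) : ℝ) = m - 2 := by push_cast [Nat.cast_sub (by omega : 2 ≤ m)]; ring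
  have hcompare : ∀ (N : ℕ) (u : ℝ), 1 ≤ (N : ℝ) → (N : ℝ) ≤ R → 1 ≤ u → u ≤ R →
      |(N : ℝ) - u| ≤ 5 →
      |log (N.superFactorial : ℝ) - logSuperFactorialApprox u| ≤ 9 * (R * (log R + 1)) :=
    fun N u h1 h2 h3 h4 h5 ↦
      (abs_log_superFactorial_sub_approx_le ⟨h1, h2⟩ ⟨h3, h4⟩ h5).trans_eq (by norm_num)
  have e1 := hcompare (n - 1) n (by linarith) (by nlinarith) (by linarith) (by linarith)
    (by rw [hq, abs_le]; constructor <;> linarith)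
  have e2 := hcompare (m - 2) (s * n) (by linarith) (by linarith) (by linarith) (by nlinarith)
    (by rw [hp, abs_le]; constructor <;> linarith)
  have e3 := hcompare (m - 2 + (n - 1) + 1) ((s + 1) * n)
    (by push_cast [hp, hq]; linarith) (by push_cast [hp, hq]; linarith) (by linarith) (by linarith)
    (by push_cast [hp, hq]; rw [abs_le]; constructor <;> linarith)
  have e4 := hcompare (2 * (m - 2) + 2 * (n - 1) + 3) R
    (by push_cast [hp, hq]; linarith) (by push_cast [hp, hq]; linarith) (by linarith) le_rfl
    (by push_cast [hp, hq]; rw [abs_le]; constructor <;> linarith)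
  have e5 := hcompare (2 * (m - 2) + (n - 1) + 2) ((2 * s + 1) * n)
    (by push_cast [hp, hq]; linarith) (by push_cast [hp, hq]; linarith) (by linarith) (by linarith)
    (by push_cast [hp, hq]; rw [abs_le]; constructor <;> linarith)
  rw [log_Δ_eq (by omega : n = n - 1 + 1) (by omega : m = m - 2 + 2),
    ← logSuperFactorialApprox_combination hs (by positivity)]
  rw [abs_le] at e1 e2 e3 e4 e5 ⊢
  constructor <;> linarith [e1.1, e1.2, e2.1, e2.2, e3.1, e3.2, e4.1, e4.2, e5.1, e5.2]

/-- For fixed `s > 0`, as `n → ∞`,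
`log Δ_n(s) = (((2s+1)²/2)log(2s+1) − s²log s − (s+1)²log(s+1) − 2(s+1)²log 2)·n²
  + O(n log n)`. -/
theorem delta_asymptotic (s : ℝ) (hs : 0 < s) :
    ∃ C > (0 : ℝ), ∃ N : ℕ, ∀ n : ℕ, N ≤ n →
      |Real.log (Δ s n) -
          (((2 * s + 1) ^ 2 / 2) * Real.log (2 * s + 1) - s ^ 2 * Real.log s -
            (s + 1) ^ 2 * Real.log (s + 1) - 2 * (s + 1) ^ 2 * Real.log 2) * (n : ℝ) ^ 2| ≤
        C * n * Real.log n := by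
  refine ⟨189 * (2 * s + 2), by positivity, ⌈3 / s⌉₊ + ⌈2 * s + 2⌉₊ + 3, fun n hn ↦ ?_⟩
  have hn3 : (3 : ℝ) ≤ n := by exact_mod_cast (by omega : 3 ≤ n)
  have hsn : 3 ≤ s * n := by
    have : 3 / s ≤ n := (Nat.le_ceil _).trans (by exact_mod_cast (by omega : ⌈3 / s⌉₊ ≤ n))
    rwa [div_le_iff₀ hs, mul_comm] at this
  have hcn : 2 * s + 2 ≤ n :=
    (Nat.le_ceil _).trans (by exact_mod_cast (by omega : ⌈2 * s + 2⌉₊ ≤ n))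
  have hen : exp 1 ≤ n := (exp_one_lt_d9.le.trans (by norm_num)).trans hn3
  calc _ ≤ 63 * ((2 * s + 2) * n * (log ((2 * s + 2) * n) + 1)) :=
        abs_log_Δ_sub_le hs (by omega) hsn
    _ ≤ 63 * (3 * (2 * s + 2) * (n * log n)) := by
        linarith [mul_log_mul_add_one_le (by linarith) hcn hen]
    _ = _ := by ring
end

section
/- Let s > 0, n a positive integer with ⌊sn⌋ ≥ 2, α = β = ⌊sn⌋, and Δ_n(s) = ∏_{j=0}^{n−1} (α+j−1)!·(β+j−1)!·j!/(α+β+n+j−2)!. Then ψ₁(2⌊sn⌋+2n) − ψ₁(2⌊sn⌋+n) ≥ −log Δ_n(s), where ψ₁(x) = ∑_{m≤x} ψ(m) and ψ is the Chebyshev psi-function. -/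
open ArithmeticFunction

/-- Chebyshev's ψ-function at an integer: `ψ(m) = ∑_{j ≤ m} Λ(j)`. -/
noncomputable def chebyshevPsi (m : ℕ) : ℝ := ∑ j ∈ Finset.Icc 1 m, Λ j

/-- `ψ₁(m) = ∑_{k ≤ m} ψ(k)`. -/
noncomputable def chebyshevPsi₁ (m : ℕ) : ℝ := ∑ k ∈ Finset.Icc 1 m, chebyshevPsi k

/-!
With `b = ⌊sn⌋ - 1`, the Beta values `B(b+i+1, b+j+1) = (b+i)! (b+j)! / (2b+i+j+1)!`,
`0 ≤ i, j < n`, form a matrix with determinant `±Δ_n(s)`: reversing its columns turns it, up to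
diagonal factors, into the Vandermonde-type matrix of the falling factorials
`(2b+n+i)(2b+n+i-1)⋯(2b+n+i-j+1)`.
Since `d_N · B(u+1, v+1)` is an integer for `u + v + 1 ≤ N`, multiplying row `i` by `d_{2b+n+i}`
gives an integer matrix with nonzero determinant, hence `1 ≤ Δ_n(s) ∏ᵢ d_{2b+n+i}`. Taking
logarithms, `log d_m = ψ(m)` and the monotonicity of `ψ` give the bound.
-/

open Finset Matrix Polynomial Chebyshev Nat

lemma chebyshevPsi_eq_psi (m : ℕ) : chebyshevPsi m = ψ m := by
  rw [chebyshevPsi, psi, Nat.floor_natCast, ← Icc_add_one_left_eq_Ioc, zero_add]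

lemma chebyshevPsi₁_add_sub (a n : ℕ) :
    chebyshevPsi₁ (a + n) - chebyshevPsi₁ a = ∑ i ∈ range n, ψ (a + 1 + i : ℕ) := by
  induction n with
  | zero => simp
  | succ n ih =>
    rw [sum_range_succ, ← ih]
    simp only [chebyshevPsi₁, ← add_assoc]
    rw [sum_Icc_succ_top (by omega), chebyshevPsi_eq_psi, add_right_comm a 1 n]
    ring

lemma det_vandermonde_natCast (n : ℕ) :
    (vandermonde fun i : Fin n => (i : ℝ)).det = ∏ j ∈ range n, (j ! : ℝ) := by
  cases n with
  | zero => simp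
  | succ n =>
    rw [det_vandermonde_id_eq_superFactorial, ← Nat.prod_range_succ_factorial]
    push_cast
    rfl

lemma det_inv_factorial_sub (m n : ℕ) (h : n ≤ m + 1) :
    (of fun i j : Fin n => (((m + i - j)! : ℕ) : ℝ)⁻¹).det =
      ∏ j ∈ range n, (j ! : ℝ) / (m + j)! := by
  have hrow : (of fun i j : Fin n => (((m + i - j)! : ℕ) : ℝ)⁻¹) =
      of fun i j : Fin n => (((m + i)! : ℕ) : ℝ)⁻¹ *
        of (fun i j : Fin n => (descPochhammer ℝ j).eval ((m + i : ℕ) : ℝ)) i j := by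
    ext i j
    have hj : (j : ℕ) ≤ m + i := by omega
    have hd : ((m + i).descFactorial j : ℝ) ≠ 0 := by
      exact_mod_cast (Nat.descFactorial_pos.mpr hj).ne'
    rw [of_apply, of_apply, of_apply, descPochhammer_eval_eq_descFactorial,
      ← Nat.factorial_mul_descFactorial hj, Nat.cast_mul, mul_inv, mul_assoc,
      inv_mul_cancel₀ hd, mul_one]
  rw [hrow, det_mul_column, ← det_eval_matrixOfPolynomials_eq_det_vandermonde _ _
      (fun j => descPochhammer_natDegree ℝ j) (fun j => monic_descPochhammer ℝ j)]
  push_cast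
  simp_rw [add_comm (m : ℝ)]
  rw [det_vandermonde_add (fun i : Fin n => (i : ℝ)), det_vandermonde_natCast,
    Fin.prod_univ_eq_prod_range (fun i => (((m + i)! : ℕ) : ℝ)⁻¹), ← prod_mul_distrib]
  refine prod_congr rfl fun j _ => ?_
  rw [div_eq_mul_inv, mul_comm]

lemma abs_det_inv_factorial_add (c n : ℕ) :
    |(of fun i j : Fin n => (((c + i + j)! : ℕ) : ℝ)⁻¹).det| =
      ∏ j ∈ range n, (j ! : ℝ) / (c + n - 1 + j)! := by
  have hrev : (of fun i j : Fin n => (((c + i + j)! : ℕ) : ℝ)⁻¹).submatrix id Fin.revPerm =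
      of fun i j : Fin n => (((c + n - 1 + i - j)! : ℕ) : ℝ)⁻¹ := by
    ext i j
    simp only [submatrix_apply, id, of_apply, Fin.revPerm_apply, Fin.val_rev]
    congr 4
    omega
  rw [← abs_det_submatrix_equiv_equiv (Equiv.refl _) Fin.revPerm, Equiv.coe_refl, hrev,
    det_inv_factorial_sub _ _ (by omega), abs_of_nonneg (by positivity)]

/-- `natBeta u v = B(u + 1, v + 1) = ∫₀¹ xᵘ (1 - x)ᵛ dx`. -/
noncomputable def natBeta (u v : ℕ) : ℝ := (u ! * v ! : ℝ) / (u + v + 1)!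

lemma natBeta_eq_add (u v : ℕ) : natBeta u v = natBeta (u + 1) v + natBeta u (v + 1) := by
  rw [natBeta, natBeta, natBeta, show u + 1 + v + 1 = u + v + 1 + 1 by omega,
    show u + (v + 1) + 1 = u + v + 1 + 1 by omega]
  push_cast [Nat.factorial_succ]
  field_simp
  ring

lemma exists_int_eq_lcmUpto_mul_natBeta {N u v : ℕ} (h : u + v + 1 ≤ N) :
    ∃ z : ℤ, (z : ℝ) = lcmUpto N * natBeta u v := by
  induction u generalizing v with
  | zero =>
    obtain ⟨k, hk⟩ : v + 1 ∣ lcmUpto N := Finset.dvd_lcm (mem_Icc.mpr ⟨by omega, by omega⟩)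
    refine ⟨k, ?_⟩
    rw [hk, natBeta, zero_add, Nat.factorial_zero, Nat.factorial_succ]
    push_cast
    field_simp
  | succ u ih =>
    obtain ⟨z₁, h₁⟩ := ih (v := v) (by omega)
    obtain ⟨z₂, h₂⟩ := ih (v := v + 1) (by omega)
    refine ⟨z₁ - z₂, ?_⟩
    rw [Int.cast_sub, h₁, h₂, natBeta_eq_add u v]
    ring

lemma one_le_abs_det_of_forall_exists_int {ι : Type*} [Fintype ι] [DecidableEq ι]
    (A : Matrix ι ι ℝ) (hA : ∀ i j, ∃ z : ℤ, (z : ℝ) = A i j) (hdet : A.det ≠ 0) :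
    1 ≤ |A.det| := by
  choose Z hZ using hA
  have hcast : A.det = ((of Z).det : ℝ) := by
    rw [Int.cast_det]
    congr
    ext i j
    exact (hZ i j).symm
  rw [hcast] at hdet ⊢
  exact_mod_cast Int.one_le_abs (by exact_mod_cast hdet)

lemma abs_det_natBeta (b n : ℕ) :
    |(of fun i j : Fin n => natBeta (b + i) (b + j)).det| =
      ∏ j ∈ range n, ((b + j)! * (b + j)! * j ! : ℝ) / (2 * b + n + j)! := by
  have hsplit : (of fun i j : Fin n => natBeta (b + i) (b + j)) =
      of fun i j : Fin n => ((b + i)! : ℝ) * of (fun i j : Fin n => ((b + j)! : ℝ) *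
        of (fun i j : Fin n => (((2 * b + 1 + i + j)! : ℕ) : ℝ)⁻¹) i j) i j := by
    ext i j
    simp only [natBeta, of_apply, div_eq_mul_inv]
    rw [show b + i + (b + j) + 1 = 2 * b + 1 + i + j by omega]
    ring
  rw [hsplit, det_mul_column, det_mul_row, abs_mul, abs_mul, abs_det_inv_factorial_add,
    show 2 * b + 1 + n - 1 = 2 * b + n by omega, abs_of_nonneg (by positivity),
    Fin.prod_univ_eq_prod_range (fun i => ((b + i)! : ℝ)), ← prod_mul_distrib,
    ← prod_mul_distrib]
  refine prod_congr rfl fun j _ => ?_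
  ring

lemma neg_log_le_sum_psi (b n : ℕ) :
    -Real.log (∏ j ∈ range n, ((b + j)! * (b + j)! * j ! : ℝ) / (2 * b + n + j)!) ≤
      ∑ i ∈ range n, ψ (2 * b + n + i : ℕ) := by
  set P := ∏ j ∈ range n, ((b + j)! * (b + j)! * j ! : ℝ) / (2 * b + n + j)!
  set L : ℕ → ℝ := fun i => lcmUpto (2 * b + n + i)
  set M := of fun i j : Fin n => natBeta (b + i) (b + j)
  have hP : 0 < P := by positivity
  have hL : 0 < ∏ i ∈ range n, L i := prod_pos fun _ _ => Nat.cast_pos.mpr (lcmUpto_pos _)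
  have hM : M.det ≠ 0 := abs_pos.mp (by rw [abs_det_natBeta]; exact hP)
  have hA : ∀ i j : Fin n, ∃ z : ℤ, (z : ℝ) = L i * M i j := fun i j =>
    exists_int_eq_lcmUpto_mul_natBeta (by omega)
  have hdet : (of fun i j : Fin n => L i * M i j).det = (∏ i ∈ range n, L i) * M.det := by
    rw [det_mul_column, Fin.prod_univ_eq_prod_range]
  have hone := one_le_abs_det_of_forall_exists_int (of fun i j : Fin n => L i * M i j) hA
    (by rw [hdet]; exact mul_ne_zero hL.ne' hM)
  rw [hdet, abs_mul, abs_of_pos hL, abs_det_natBeta] at hone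
  have hlog := Real.log_nonneg hone
  rw [Real.log_mul hL.ne' hP.ne',
    Real.log_prod fun _ _ => Nat.cast_ne_zero.mpr (lcmUpto_ne_zero _)] at hlog
  simp only [← psi_eq_log_lcmUpto] at hlog
  linarith

theorem psi_one_lower_bound_general (s : ℝ) (n : ℕ)
    (hfloor : 2 ≤ ⌊s * n⌋₊) :
    chebyshevPsi₁ (2 * ⌊s * n⌋₊ + 2 * n) - chebyshevPsi₁ (2 * ⌊s * n⌋₊ + n) ≥
      -Real.log (Δ s n) := by
  set q := ⌊s * n⌋₊
  have hΔ : Δ s n =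
      ∏ j ∈ range n, ((q - 1 + j)! * (q - 1 + j)! * j ! : ℝ) / (2 * (q - 1) + n + j)! := by
    refine prod_congr rfl fun j _ => ?_
    rw [show q + j - 1 = q - 1 + j by omega, show q + q + n + j - 2 = 2 * (q - 1) + n + j by omega]
  rw [ge_iff_le, show 2 * q + 2 * n = 2 * q + n + n by ring, chebyshevPsi₁_add_sub, hΔ]
  refine (neg_log_le_sum_psi (q - 1) n).trans (sum_le_sum fun i _ => psi_mono ?_)
  exact_mod_cast (show 2 * (q - 1) + n + i ≤ 2 * q + n + 1 + i by omega)

/-- For `s > 0` and `n` with `⌊sn⌋ ≥ 2`,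
`ψ₁(2⌊sn⌋+2n) − ψ₁(2⌊sn⌋+n) ≥ −log Δ_n(s)`. -/
theorem psi_one_lower_bound (s : ℝ) (hs : 0 < s) (n : ℕ) (hn : 0 < n)
    (hfloor : 2 ≤ ⌊s * n⌋₊) :
    chebyshevPsi₁ (2 * ⌊s * n⌋₊ + 2 * n) - chebyshevPsi₁ (2 * ⌊s * n⌋₊ + n) ≥
      -Real.log (Δ s n) :=
  psi_one_lower_bound_general s n hfloor
end

section
/- For positive integers α, β and n, the n-fold integral (1/n!)·∫_{[0,1]^n} ∏_{i=1}^n x_i^{α−1}(1−x_i)^{β−1} · ∏_{1≤i<j≤n}(x_i−x_j)² dx_1···dx_n equals the determinant of the n×n Hankel matrix with (i,j) entry ∫_0^1 x^{α+i+j−3}(1−x)^{β−1} dx. -/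
open MeasureTheory Set Equiv Equiv.Perm Finset

/-! Since `(∏ j, w x_j) * det (x_j ^ i) ^ 2 = det (x_j ^ i) * det (w x_j * x_j ^ i)`, Heine's
identity is a case of Andréief's identity. Expanding both determinants over permutations `σ, τ`,
Fubini factors each term into `∏ j, ∫ t ^ (σ j + τ j) w t`; for fixed `σ` the sum over `τ` is
`sign σ` times the Hankel determinant of these moments, so each of the `n!` permutations `σ`
contributes that determinant once. -/

namespace Matrix

variable {ι R : Type*} [Fintype ι] [DecidableEq ι] [CommRing R]

theorem sum_sign_mul_prod_apply_perm (M : Matrix ι ι R) (σ : Perm ι) :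
    ∑ τ : Perm ι, ((sign τ : ℤ) : R) * ∏ i, M (σ i) (τ i) = ((sign σ : ℤ) : R) * M.det := by
  rw [← det_permute, ← det_transpose, det_apply']
  rfl

theorem sum_sum_sign_mul_sign_mul_prod_apply_perm (M : Matrix ι ι R) :
    ∑ σ : Perm ι, ∑ τ : Perm ι, ((sign σ : ℤ) : R) * ((sign τ : ℤ) : R) *
      ∏ i, M (σ i) (τ i) = (Fintype.card ι).factorial * M.det := by
  have hsign (σ : Perm ι) : ((sign σ : ℤ) : R) * ((sign σ : ℤ) : R) = 1 := by
    rw [← Int.cast_mul, ← Units.val_mul, Int.units_mul_self, Units.val_one, Int.cast_one]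
  simp_rw [mul_assoc, ← Finset.mul_sum, sum_sign_mul_prod_apply_perm, ← mul_assoc, hsign,
    one_mul, Finset.sum_const, Finset.card_univ, Fintype.card_perm, nsmul_eq_mul]

theorem det_mul_det_eq_sum_sum {E : Type*} (f g : ι → E → R) (x : ι → E) :
    (of fun i j => f i (x j)).det * (of fun i j => g i (x j)).det =
      ∑ σ : Perm ι, ∑ τ : Perm ι, ((sign σ : ℤ) : R) * ((sign τ : ℤ) : R) *
        ∏ j, f (σ j) (x j) * g (τ j) (x j) := by
  simp only [det_apply', of_apply, Finset.sum_mul_sum, Finset.prod_mul_distrib]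
  refine Finset.sum_congr rfl fun σ _ => Finset.sum_congr rfl fun τ _ => ?_
  ring

end Matrix

section Andreief

variable {ι E 𝕜 : Type*} [Fintype ι] [DecidableEq ι] [RCLike 𝕜] [MeasurableSpace E]
  {μ : Measure E} [SigmaFinite μ]

theorem integral_det_mul_det_eq_factorial_mul_det (f g : ι → E → 𝕜)
    (hfg : ∀ i j, Integrable (fun t => f i t * g j t) μ) :
    ∫ x : ι → E, (Matrix.of fun i j => f i (x j)).det * (Matrix.of fun i j => g i (x j)).det
        ∂(Measure.pi fun _ => μ) =
      ((Fintype.card ι).factorial : 𝕜) * (Matrix.of fun i j => ∫ t, f i t * g j t ∂μ).det := by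
  have hterm (σ τ : Perm ι) : Integrable (fun x : ι → E => ∏ j, f (σ j) (x j) * g (τ j) (x j))
      (Measure.pi fun _ => μ) :=
    Integrable.fintype_prod fun j => hfg (σ j) (τ j)
  have hterm_integral (σ τ : Perm ι) :
      ∫ x : ι → E, ∏ j, f (σ j) (x j) * g (τ j) (x j) ∂(Measure.pi fun _ => μ) =
        ∏ j, ∫ t, f (σ j) t * g (τ j) t ∂μ :=
    integral_fintype_prod_eq_prod fun j t => f (σ j) t * g (τ j) t
  simp_rw [Matrix.det_mul_det_eq_sum_sum]
  rw [integral_finsetSum _ fun σ _ => integrable_finsetSum _ fun τ _ => (hterm σ τ).const_mul _]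
  simp_rw [integral_finsetSum _ fun τ _ => (hterm _ τ).const_mul _, integral_const_mul,
    hterm_integral]
  exact Matrix.sum_sum_sign_mul_sign_mul_prod_apply_perm
    (Matrix.of fun i j => ∫ t, f i t * g j t ∂μ)

end Andreief

theorem prod_Ioi_sub_sq_eq_det_vandermonde_sq {R : Type*} [CommRing R] {n : ℕ} (x : Fin n → R) :
    ∏ i : Fin n, ∏ j ∈ Ioi i, (x i - x j) ^ 2 = (Matrix.vandermonde x).det ^ 2 := by
  simp_rw [Matrix.det_vandermonde, ← Finset.prod_pow, sub_sq_comm]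

theorem integral_prod_mul_det_vandermonde_sq {𝕜 : Type*} [RCLike 𝕜] [MeasurableSpace 𝕜]
    {μ : Measure 𝕜} [SigmaFinite μ] {n : ℕ} (w : 𝕜 → 𝕜)
    (hw : ∀ k : ℕ, Integrable (fun t => t ^ k * w t) μ) :
    ∫ x : Fin n → 𝕜, (∏ i, w (x i)) * (Matrix.vandermonde x).det ^ 2
        ∂(Measure.pi fun _ => μ) =
      (n.factorial : 𝕜) * (Matrix.of fun i j : Fin n => ∫ t, t ^ (i.val + j.val) * w t ∂μ).det := by
  have hmoment (i j : ℕ) (t : 𝕜) : t ^ i * (w t * t ^ j) = t ^ (i + j) * w t := by ring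
  have hdet (x : Fin n → 𝕜) : (∏ i, w (x i)) * (Matrix.vandermonde x).det ^ 2 =
      (Matrix.of fun i j : Fin n => x j ^ i.val).det *
        (Matrix.of fun i j : Fin n => w (x j) * x j ^ i.val).det := by
    have hV : (Matrix.of fun i j : Fin n => x j ^ i.val).det = (Matrix.vandermonde x).det :=
      Matrix.det_transpose _
    have hwV : (Matrix.of fun i j : Fin n => w (x j) * x j ^ i.val).det =
        (∏ i, w (x i)) * (Matrix.vandermonde x).det := by
      rw [← Matrix.det_transpose (Matrix.vandermonde x)]
      exact Matrix.det_mul_row _ _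
    rw [hV, hwV]
    ring
  simp_rw [hdet]
  refine (integral_det_mul_det_eq_factorial_mul_det (fun (i : Fin n) t => t ^ i.val)
    (fun j t => w t * t ^ j.val) fun i j => by simpa only [hmoment] using hw _).trans ?_
  simp_rw [hmoment, Fintype.card_fin]

theorem heine_identity_general (α β n : ℕ) (hα : 0 < α) :
    (1 / (n.factorial : ℝ)) *
      ∫ x : Fin n → ℝ in Set.univ.pi (fun _ => Set.Icc (0 : ℝ) 1),
        (∏ i, x i ^ (α - 1) * (1 - x i) ^ (β - 1)) *
          ∏ i : Fin n, ∏ j ∈ Finset.Ioi i, (x i - x j) ^ 2 =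
    Matrix.det (Matrix.of fun i j : Fin n =>
      ∫ t in Set.Icc (0 : ℝ) 1, t ^ (α + i.val + j.val - 1) * (1 - t) ^ (β - 1)) := by
  have hmoment (i j : ℕ) (t : ℝ) : t ^ (α + i + j - 1) * (1 - t) ^ (β - 1) =
      t ^ (i + j) * (t ^ (α - 1) * (1 - t) ^ (β - 1)) := by
    rw [← mul_assoc, ← pow_add]
    congr 2
    omega
  have hw (k : ℕ) : Integrable (fun t : ℝ => t ^ k * (t ^ (α - 1) * (1 - t) ^ (β - 1)))
      (volume.restrict (Icc 0 1)) :=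
    (by fun_prop : Continuous _).integrableOn_Icc
  simp_rw [volume_pi, Measure.restrict_pi_pi, prod_Ioi_sub_sq_eq_det_vandermonde_sq, hmoment]
  rw [integral_prod_mul_det_vandermonde_sq _ hw, one_div,
    inv_mul_cancel_left₀ (Nat.cast_ne_zero.mpr n.factorial_ne_zero)]

/-- Heine's identity: for positive integers α, β, n,
`(1/n!)·∫_{[0,1]^n} ∏ x_i^{α−1}(1−x_i)^{β−1} ∏_{i<j}(x_i−x_j)² dx
  = det(∫_0^1 x^{α+i+j−3}(1−x)^{β−1} dx)` (1-based indices i, j). -/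
theorem heine_identity (α β n : ℕ) (hα : 0 < α) (hβ : 0 < β) (hn : 0 < n) :
    (1 / (n.factorial : ℝ)) *
      ∫ x : Fin n → ℝ in Set.univ.pi (fun _ => Set.Icc (0 : ℝ) 1),
        (∏ i, x i ^ (α - 1) * (1 - x i) ^ (β - 1)) *
          ∏ i : Fin n, ∏ j ∈ Finset.Ioi i, (x i - x j) ^ 2 =
    Matrix.det (Matrix.of fun i j : Fin n =>
      ∫ t in Set.Icc (0 : ℝ) 1, t ^ (α + i.val + j.val - 1) * (1 - t) ^ (β - 1)) :=
  heine_identity_general α β n hα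
end

section
/- For positive integers α, β and n, the Selberg integral with γ=1, namely ∫_{[0,1]^n} ∏_{i=1}^n x_i^{α−1}(1−x_i)^{β−1} · ∏_{1≤i<j≤n}(x_i−x_j)² dx_1···dx_n, equals ∏_{j=0}^{n−1} (α+j−1)!·(β+j−1)!·(j+1)!/(α+β+n+j−2)!. -/
/-!
Write `a = α - 1`, `b = β - 1` and `w x = x ^ a * (1 - x) ^ b`; the integrand is
`∏ w (x i) * det [x i ^ k] ^ 2`. Replacing one Vandermonde factor by `det [q k (x i)]`, with
`q k` the Jacobi polynomials of the weight `w`, multiplies it by the product of their leading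
coefficients `(a + b + 2k)! / (a + b + k)!` (Chu–Vandermonde). Andréief's identity
`∫ det [f k (x i)] * det [g k (x i)] = n! * det [∫ f j * g k]` then turns the integral into the
determinant of the moments `∫ q j x * x ^ s * w x`. Written out with Rodrigues' formula, such a
moment is an alternating binomial sum of Beta integrals, i.e. a `j`-th finite difference of a
polynomial of degree `s`: it vanishes for `s < j` and equals `j! (a+j)! (b+j)! / (a+b+2j+1)!`
for `s = j`. The moment matrix is therefore triangular, and what is left is a telescoping
identity between products of factorials.
-/

open MeasureTheory Polynomial Finset Nat Matrix

theorem Polynomial.sum_range_neg_one_pow_mul_choose_mul_eval {R : Type*} [CommRing R] {P : R[X]}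
    {n : ℕ} (hP : P.natDegree ≤ n) :
    ∑ k ∈ range (n + 1), (-1) ^ (n - k) * n.choose k * P.eval (k : R) = n ! * P.coeff n := by
  have hsum := fwdDiff_iter_eq_sum_shift (h := (1 : R)) P.eval n 0
  simp only [zero_add, nsmul_eq_mul, mul_one, zsmul_eq_mul, Int.cast_mul, Int.cast_pow,
    Int.cast_neg, Int.cast_one, Int.cast_natCast] at hsum
  rw [← hsum]
  rcases hP.lt_or_eq with hlt | rfl
  · rw [fwdDiff_iter_eq_zero_of_degree_lt hlt, coeff_eq_zero_of_natDegree_lt hlt]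
    simp
  · rw [fwdDiff_iter_degree_eq_factorial, ← leadingCoeff]
    simp [mul_comm]

theorem Polynomial.natDegree_one_sub_X_le {R : Type*} [CommRing R] :
    (1 - X : R[X]).natDegree ≤ 1 :=
  (natDegree_sub_le _ _).trans (max_le (by simp) natDegree_X_le)

theorem Polynomial.natDegree_X_pow_mul_one_sub_X_pow_le {R : Type*} [CommRing R] (k m : ℕ) :
    (X ^ k * (1 - X : R[X]) ^ m).natDegree ≤ k + m :=
  natDegree_mul_le.trans <| _root_.add_le_add (natDegree_X_pow_le k) <|
    natDegree_pow_le_of_le m natDegree_one_sub_X_le |>.trans_eq (mul_one m)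

theorem Polynomial.coeff_X_pow_mul_one_sub_X_pow {R : Type*} [CommRing R] (k m : ℕ) :
    (X ^ k * (1 - X : R[X]) ^ m).coeff (k + m) = (-1) ^ m := by
  rw [coeff_X_pow_mul', if_pos (Nat.le_add_right k m), Nat.add_sub_cancel_left]
  simpa [coeff_one] using coeff_pow_of_natDegree_le (m := m) (natDegree_one_sub_X_le (R := R))

theorem Nat.add_descFactorial_eq_sum_range (m n k : ℕ) :
    (m + n).descFactorial k =
      ∑ i ∈ range (k + 1), k.choose i * (m.descFactorial i * n.descFactorial (k - i)) := by
  have h := Ring.descPochhammer_smeval_add k (Commute.all (m : ℤ) n)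
  simp only [← Nat.cast_add, descPochhammer_smeval_eq_descFactorial] at h
  rw [Finset.Nat.sum_antidiagonal_eq_sum_range_succ
    (fun i j => (k.choose i : ℤ) * ((m.descFactorial i : ℤ) * n.descFactorial j))] at h
  exact_mod_cast h

theorem Nat.prod_descFactorial_mul_factorial_eq_prod_factorial (m n : ℕ) :
    ∏ j ∈ range n, (m + 2 * j).descFactorial j * (m + 2 * j + 1)! =
      ∏ j ∈ range n, (m + n + j)! := by
  induction n with
  | zero => rfl
  | succ n ih =>
    have hshift : (∏ j ∈ range (n + 1), (m + (n + 1) + j)!) * (m + n)! =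
        (∏ j ∈ range n, (m + n + j)!) * (m + 2 * n)! * (m + 2 * n + 1)! := by
      have h := prod_range_succ' (fun j => (m + n + j)!) (n + 1)
      rw [prod_range_succ, prod_range_succ] at h
      simp only [← add_assoc, add_right_comm _ _ 1, add_zero,
        show m + n + n = m + 2 * n by ring] at h ⊢
      exact h.symm
    have hdesc := Nat.factorial_mul_descFactorial (show n ≤ m + 2 * n by omega)
    rw [show m + 2 * n - n = m + n by omega] at hdesc
    refine Nat.eq_of_mul_eq_mul_right (Nat.factorial_pos (m + n)) ?_
    rw [hshift, prod_range_succ, ih, ← hdesc]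
    ring

theorem Nat.prod_range_factorial_succ_eq_factorial_mul_prod (n : ℕ) :
    ∏ j ∈ range n, (j + 1)! = n ! * ∏ j ∈ range n, j ! := by
  simp_rw [Nat.factorial_succ, prod_mul_distrib, prod_range_add_one_eq_factorial]

theorem Matrix.sum_sign_mul_prod_apply_perm_s14 {ι R : Type*} [Fintype ι] [DecidableEq ι]
    [CommRing R] (M : Matrix ι ι R) (σ : Equiv.Perm ι) :
    ∑ τ : Equiv.Perm ι, (Equiv.Perm.sign τ : R) * ∏ i, M (σ i) (τ i) =
      Equiv.Perm.sign σ * M.det := by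
  rw [← det_permute, ← det_transpose, det_apply']
  rfl

theorem Matrix.det_of_apply_eq_sum {ι α R : Type*} [Fintype ι] [DecidableEq ι] [CommRing R]
    (h : ι → α → R) (x : ι → α) :
    (of fun i k => h k (x i)).det =
      ∑ σ : Equiv.Perm ι, (Equiv.Perm.sign σ : R) * ∏ i, h (σ i) (x i) := by
  rw [← det_transpose, det_apply']
  rfl

theorem Matrix.det_of_eval_eq_prod_coeff_mul_det_vandermonde {R : Type*} [CommRing R] {n : ℕ}
    (p : Fin n → R[X]) (hp : ∀ k, (p k).natDegree ≤ k) (x : Fin n → R) :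
    (of fun i k => (p k).eval (x i)).det = (∏ k, (p k).coeff k) * (vandermonde x).det := by
  rw [eval_matrixOfPolynomials_eq_vandermonde_mul_matrixOfPolynomials x p hp, det_mul,
    det_of_isUpperTriangular (matrixOfPolynomials_blockTriangular p hp), mul_comm]
  rfl

theorem Matrix.det_vandermonde_sq {R : Type*} [CommRing R] {n : ℕ} (x : Fin n → R) :
    (vandermonde x).det ^ 2 = ∏ i, ∏ j ∈ Ioi i, (x i - x j) ^ 2 := by
  simp_rw [det_vandermonde, ← prod_pow]
  exact prod_congr rfl fun i _ => prod_congr rfl fun j _ => sub_sq_comm _ _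

theorem integral_det_mul_det {ι α : Type*} [Fintype ι] [DecidableEq ι] [MeasurableSpace α]
    (μ : Measure α) [SigmaFinite μ] (f g : ι → α → ℝ)
    (hfg : ∀ j k, Integrable (fun y => f j y * g k y) μ) :
    ∫ x : ι → α, (of fun i k => f k (x i)).det * (of fun i k => g k (x i)).det
        ∂(Measure.pi fun _ => μ) =
      ((Fintype.card ι)! : ℝ) * (of fun j k => ∫ y, f j y * g k y ∂μ).det := by
  set M : Matrix ι ι ℝ := of fun j k => ∫ y, f j y * g k y ∂μ
  have hint : ∀ σ τ : Equiv.Perm ι, Integrable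
      (fun x : ι → α => ∏ i, f (σ i) (x i) * g (τ i) (x i)) (Measure.pi fun _ => μ) :=
    fun σ τ => Integrable.fintype_prod fun i => hfg (σ i) (τ i)
  have hexpand : ∀ x : ι → α, (of fun i k => f k (x i)).det * (of fun i k => g k (x i)).det =
      ∑ σ : Equiv.Perm ι, ∑ τ : Equiv.Perm ι, (Equiv.Perm.sign σ : ℝ) *
        ((Equiv.Perm.sign τ : ℝ) * ∏ i, f (σ i) (x i) * g (τ i) (x i)) := by
    intro x
    simp only [det_of_apply_eq_sum, sum_mul_sum, prod_mul_distrib]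
    exact sum_congr rfl fun σ _ => sum_congr rfl fun τ _ => by ring
  calc _ = ∑ σ : Equiv.Perm ι, (Equiv.Perm.sign σ : ℝ) *
          ∑ τ : Equiv.Perm ι, (Equiv.Perm.sign τ : ℝ) * ∏ i, M (σ i) (τ i) := by
        simp_rw [hexpand]
        rw [integral_finsetSum _ fun σ _ => integrable_finsetSum _ fun τ _ =>
          ((hint σ τ).const_mul _).const_mul _]
        refine sum_congr rfl fun σ _ => ?_
        rw [integral_finsetSum _ fun τ _ => ((hint σ τ).const_mul _).const_mul _, mul_sum]
        refine sum_congr rfl fun τ _ => ?_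
        rw [integral_const_mul, integral_const_mul, integral_fintype_prod_eq_prod
          (fun i y => f (σ i) y * g (τ i) y)]
        rfl
    _ = ∑ σ : Equiv.Perm ι, M.det := by
        refine sum_congr rfl fun σ _ => ?_
        rw [sum_sign_mul_prod_apply_perm_s14, ← mul_assoc, ← Int.cast_mul, ← Units.val_mul,
          Int.units_mul_self, Units.val_one, Int.cast_one, one_mul]
    _ = _ := by rw [sum_const, Finset.card_univ, Fintype.card_perm, nsmul_eq_mul]

theorem integrableOn_Icc_pow_mul_one_sub_pow (p q : ℕ) :
    IntegrableOn (fun x : ℝ => x ^ p * (1 - x) ^ q) (Set.Icc 0 1) :=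
  (by fun_prop : Continuous fun x : ℝ => x ^ p * (1 - x) ^ q).integrableOn_Icc

theorem integral_Icc_pow_mul_one_sub_pow (p q : ℕ) :
    ∫ x in Set.Icc (0 : ℝ) 1, x ^ p * (1 - x) ^ q = p ! * q ! / (p + q + 1)! := by
  induction q generalizing p with
  | zero =>
    simp only [pow_zero, mul_one, add_zero, factorial_zero, factorial_succ]
    rw [integral_Icc_eq_integral_Ioc, ← intervalIntegral.integral_of_le zero_le_one, integral_pow,
      one_pow, zero_pow (succ_ne_zero p), sub_zero]
    push_cast
    field_simp
  | succ q ih =>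
    have hsplit : ∀ x : ℝ,
        x ^ p * (1 - x) ^ (q + 1) = x ^ p * (1 - x) ^ q - x ^ (p + 1) * (1 - x) ^ q :=
      fun x => by ring
    simp_rw [hsplit]
    rw [integral_sub (integrableOn_Icc_pow_mul_one_sub_pow p q)
      (integrableOn_Icc_pow_mul_one_sub_pow (p + 1) q), ih, ih]
    rw [show p + 1 + q + 1 = p + (q + 1) + 1 by ring]
    push_cast [Nat.factorial_succ, show p + (q + 1) + 1 = p + q + 1 + 1 by ring]
    field_simp
    ring

/-- Rodrigues' formula expanded by the Leibniz rule:
`x ^ a * (1 - x) ^ b * shiftedJacobi a b j x = (-1) ^ j * (d/dx) ^ j (x ^ (a+j) * (1 - x) ^ (b+j))`,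
so `shiftedJacobi a b j x = (-1) ^ j * j! * P_j^(a,b) (1 - 2x)` for the Jacobi polynomial. -/
noncomputable def shiftedJacobi (a b j : ℕ) : ℝ[X] :=
  ∑ k ∈ range (j + 1), C ((-1) ^ (j - k) * j.choose k * (a + j).descFactorial (j - k) *
    (b + j).descFactorial k : ℝ) * X ^ k * (1 - X) ^ (j - k)

theorem shiftedJacobi_natDegree_le (a b j : ℕ) : (shiftedJacobi a b j).natDegree ≤ j := by
  refine natDegree_sum_le_of_forall_le _ _ fun k hk => ?_
  rw [mul_assoc]
  refine (natDegree_C_mul_le _ _).trans ?_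
  have := natDegree_X_pow_mul_one_sub_X_pow_le (R := ℝ) k (j - k)
  have := mem_range.mp hk
  omega

theorem shiftedJacobi_coeff_self (a b j : ℕ) :
    (shiftedJacobi a b j).coeff j = (a + b + 2 * j).descFactorial j := by
  rw [shiftedJacobi, finsetSum_coeff, show a + b + 2 * j = (b + j) + (a + j) by ring,
    Nat.add_descFactorial_eq_sum_range]
  push_cast
  refine sum_congr rfl fun k hk => ?_
  have hkj : k + (j - k) = j := by have := mem_range.mp hk; omega
  have hcoeff : (X ^ k * (1 - X : ℝ[X]) ^ (j - k)).coeff j = (-1) ^ (j - k) := by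
    rw [← coeff_X_pow_mul_one_sub_X_pow k (j - k), hkj]
  rw [mul_assoc, coeff_C_mul, hcoeff]
  have hsq : ((-1 : ℝ) ^ (j - k)) ^ 2 = 1 := by rw [← pow_mul, pow_mul', neg_one_sq, one_pow]
  linear_combination
    ((j.choose k : ℝ) * (b + j).descFactorial k * (a + j).descFactorial (j - k)) * hsq

theorem eval_ascPochhammer_comp_X_add_C_natCast (s m k : ℕ) :
    ((ascPochhammer ℝ s).comp (X + C (m : ℝ))).eval (k : ℝ) = (k + m).ascFactorial s := by
  rw [eval_comp, eval_add, eval_X, eval_C, ← Nat.cast_add, ← ascPochhammer_eval_cast,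
    ascPochhammer_nat_eq_ascFactorial]

theorem descFactorial_mul_descFactorial_mul_beta (a b : ℕ) {j k : ℕ} (s : ℕ) (hk : k ≤ j) :
    ((a + j).descFactorial (j - k) * (b + j).descFactorial k : ℝ) *
        ((k + s + a)! * (j - k + b)! / (k + s + a + (j - k + b) + 1)!) =
      (a + j)! * (b + j)! / (a + b + j + s + 1)! * (k + (a + 1)).ascFactorial s := by
  have ha := Nat.factorial_mul_descFactorial (show j - k ≤ a + j by omega)
  have hb := Nat.factorial_mul_descFactorial (show k ≤ b + j by omega)
  rw [show a + j - (j - k) = a + k by omega] at ha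
  rw [show b + j - k = j - k + b by omega] at hb
  rw [show k + s + a + (j - k + b) + 1 = a + b + j + s + 1 by omega,
    show k + s + a = a + k + s by ring, ← Nat.factorial_mul_ascFactorial,
    show k + (a + 1) = a + k + 1 by ring, ← ha, ← hb]
  push_cast
  ring

theorem natDegree_ascPochhammer_comp_X_add_C (s : ℕ) (r : ℝ) :
    ((ascPochhammer ℝ s).comp (X + C r)).natDegree = s := by
  rw [natDegree_comp, ascPochhammer_natDegree, natDegree_X_add_C, mul_one]

theorem integral_shiftedJacobi_mul_pow (a b j s : ℕ) (hs : s ≤ j) :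
    ∫ x in Set.Icc (0 : ℝ) 1, x ^ a * (1 - x) ^ b * (shiftedJacobi a b j).eval x * x ^ s =
      j ! * (a + j)! * (b + j)! / (a + b + j + s + 1)! *
        ((ascPochhammer ℝ s).comp (X + C ((a + 1 : ℕ) : ℝ))).coeff j := by
  set P := (ascPochhammer ℝ s).comp (X + C ((a + 1 : ℕ) : ℝ))
  have hexpand : ∀ x : ℝ, x ^ a * (1 - x) ^ b * (shiftedJacobi a b j).eval x * x ^ s =
      ∑ k ∈ range (j + 1), ((-1) ^ (j - k) * j.choose k * (a + j).descFactorial (j - k) *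
        (b + j).descFactorial k : ℝ) * (x ^ (k + s + a) * (1 - x) ^ (j - k + b)) := by
    intro x
    simp only [shiftedJacobi, eval_finsetSum, mul_sum, sum_mul, eval_mul, eval_C, eval_pow,
      eval_X, eval_sub, eval_one]
    exact sum_congr rfl fun k _ => by ring
  have hterm : ∀ k ∈ range (j + 1), ((-1) ^ (j - k) * j.choose k *
        (a + j).descFactorial (j - k) * (b + j).descFactorial k : ℝ) *
        ((k + s + a)! * (j - k + b)! / (k + s + a + (j - k + b) + 1)!) =
      (a + j)! * (b + j)! / (a + b + j + s + 1)! *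
        ((-1) ^ (j - k) * j.choose k * P.eval (k : ℝ)) := by
    intro k hk
    rw [eval_ascPochhammer_comp_X_add_C_natCast]
    linear_combination ((-1) ^ (j - k) * j.choose k : ℝ) *
      descFactorial_mul_descFactorial_mul_beta a b s (Nat.lt_succ_iff.mp (mem_range.mp hk))
  simp_rw [hexpand]
  rw [integral_finsetSum _ fun k _ => (integrableOn_Icc_pow_mul_one_sub_pow _ _).const_mul _]
  simp_rw [integral_const_mul, integral_Icc_pow_mul_one_sub_pow]
  rw [sum_congr rfl hterm, ← mul_sum, sum_range_neg_one_pow_mul_choose_mul_eval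
    ((natDegree_ascPochhammer_comp_X_add_C s _).trans_le hs)]
  ring

theorem integral_shiftedJacobi_mul_pow_of_lt (a b : ℕ) {j s : ℕ} (hs : s < j) :
    ∫ x in Set.Icc (0 : ℝ) 1, x ^ a * (1 - x) ^ b * (shiftedJacobi a b j).eval x * x ^ s =
      0 := by
  rw [integral_shiftedJacobi_mul_pow a b j s hs.le, coeff_eq_zero_of_natDegree_lt, mul_zero]
  rwa [natDegree_ascPochhammer_comp_X_add_C]

theorem integral_shiftedJacobi_mul_pow_self (a b j : ℕ) :
    ∫ x in Set.Icc (0 : ℝ) 1, x ^ a * (1 - x) ^ b * (shiftedJacobi a b j).eval x * x ^ j =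
      j ! * (a + j)! * (b + j)! / (a + b + 2 * j + 1)! := by
  have hcoeff : ((ascPochhammer ℝ j).comp (X + C ((a + 1 : ℕ) : ℝ))).coeff j = 1 := by
    simpa only [natDegree_ascPochhammer_comp_X_add_C] using
      ((monic_ascPochhammer ℝ j).comp_X_add_C ((a + 1 : ℕ) : ℝ)).coeff_natDegree
  rw [integral_shiftedJacobi_mul_pow a b j j le_rfl, hcoeff,
    show a + b + j + j + 1 = a + b + 2 * j + 1 by ring, mul_one]

theorem prod_descFactorial_mul_selberg_integrand_eq (a b n : ℕ) (x : Fin n → ℝ) :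
    (∏ j ∈ range n, ((a + b + 2 * j).descFactorial j : ℝ)) *
        ((∏ i, x i ^ a * (1 - x i) ^ b) * ∏ i : Fin n, ∏ j ∈ Ioi i, (x i - x j) ^ 2) =
      (of fun i k : Fin n => x i ^ a * (1 - x i) ^ b * (shiftedJacobi a b k).eval (x i)).det *
        (of fun i k : Fin n => x i ^ (k : ℕ)).det := by
  have hcolumn :
      (of fun i k : Fin n => x i ^ a * (1 - x i) ^ b * (shiftedJacobi a b k).eval (x i)).det =
        (∏ i, x i ^ a * (1 - x i) ^ b) *
          (of fun i k : Fin n => (shiftedJacobi a b k).eval (x i)).det :=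
    det_mul_column _ _
  rw [hcolumn, det_of_eval_eq_prod_coeff_mul_det_vandermonde _
    (fun k => shiftedJacobi_natDegree_le a b k), ← det_vandermonde_sq]
  simp only [shiftedJacobi_coeff_self,
    Fin.prod_univ_eq_prod_range (fun j => ((a + b + 2 * j).descFactorial j : ℝ))]
  rw [vandermonde]
  ring

theorem prod_descFactorial_mul_selberg_integral_eq (a b n : ℕ) :
    (∏ j ∈ range n, ((a + b + 2 * j).descFactorial j : ℝ)) *
      ∫ x : Fin n → ℝ in Set.univ.pi (fun _ => Set.Icc (0 : ℝ) 1),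
        (∏ i, x i ^ a * (1 - x i) ^ b) * ∏ i : Fin n, ∏ j ∈ Ioi i, (x i - x j) ^ 2 =
      n ! * ∏ j ∈ range n, (j ! * (a + j)! * (b + j)! / (a + b + 2 * j + 1)! : ℝ) := by
  set f : Fin n → ℝ → ℝ := fun k y => y ^ a * (1 - y) ^ b * (shiftedJacobi a b k).eval y
  have hint : ∀ j k : Fin n,
      Integrable (fun y => f j y * y ^ (k : ℕ)) (volume.restrict (Set.Icc (0 : ℝ) 1)) :=
    fun j k => (by fun_prop : Continuous fun y => f j y * y ^ (k : ℕ)).integrableOn_Icc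
  have htriangular : (of fun j k : Fin n =>
      ∫ y in Set.Icc (0 : ℝ) 1, f j y * y ^ (k : ℕ)).BlockTriangular id :=
    fun j k hkj => integral_shiftedJacobi_mul_pow_of_lt a b hkj
  rw [← integral_const_mul, volume_pi, Measure.restrict_pi_pi]
  simp_rw [prod_descFactorial_mul_selberg_integrand_eq]
  rw [integral_det_mul_det _ f (fun k y => y ^ (k : ℕ)) hint,
    det_of_isUpperTriangular htriangular, Fintype.card_fin]
  simp only [of_apply, f, integral_shiftedJacobi_mul_pow_self]
  rw [Fin.prod_univ_eq_prod_range
    (fun j => (j ! * (a + j)! * (b + j)! / (a + b + 2 * j + 1)! : ℝ))]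

theorem prod_descFactorial_ne_zero (m n : ℕ) :
    ∏ j ∈ range n, ((m + 2 * j).descFactorial j : ℝ) ≠ 0 :=
  prod_ne_zero_iff.mpr fun j _ =>
    Nat.cast_ne_zero.mpr (by rw [Ne, Nat.descFactorial_eq_zero_iff_lt]; omega)

theorem factorial_mul_prod_div_eq_prod_descFactorial_mul_prod_div (a b n : ℕ) :
    (n ! : ℝ) * ∏ j ∈ range n, (j ! * (a + j)! * (b + j)! / (a + b + 2 * j + 1)! : ℝ) =
      (∏ j ∈ range n, ((a + b + 2 * j).descFactorial j : ℝ)) *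
        ∏ j ∈ range n, ((a + j)! * (b + j)! * (j + 1)! / (a + b + n + j)! : ℝ) := by
  have hsucc := congrArg (Nat.cast : ℕ → ℝ)
    (Nat.prod_range_factorial_succ_eq_factorial_mul_prod n)
  have hdesc := congrArg (Nat.cast : ℕ → ℝ)
    (Nat.prod_descFactorial_mul_factorial_eq_prod_factorial (a + b) n)
  push_cast [prod_mul_distrib] at hsucc hdesc
  simp only [prod_div_distrib, prod_mul_distrib, hsucc, ← hdesc]
  have : ∏ j ∈ range n, ((a + b + 2 * j + 1)! : ℝ) ≠ 0 :=
    prod_ne_zero_iff.mpr fun j _ => by positivity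
  have := prod_descFactorial_ne_zero (a + b) n
  field_simp

theorem selberg_integral_gamma_one_general (α β n : ℕ) (hα : 0 < α) (hβ : 0 < β) :
    ∫ x : Fin n → ℝ in Set.univ.pi (fun _ => Set.Icc (0 : ℝ) 1),
        (∏ i, x i ^ (α - 1) * (1 - x i) ^ (β - 1)) *
          ∏ i : Fin n, ∏ j ∈ Finset.Ioi i, (x i - x j) ^ 2 =
    ∏ j ∈ Finset.range n,
      ((α + j - 1).factorial : ℝ) * ((β + j - 1).factorial : ℝ) * ((j + 1).factorial : ℝ) /
        ((α + β + n + j - 2).factorial : ℝ) := by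
  obtain ⟨a, rfl⟩ : ∃ a, α = a + 1 := ⟨α - 1, by omega⟩
  obtain ⟨b, rfl⟩ : ∃ b, β = b + 1 := ⟨β - 1, by omega⟩
  have hrhs : ∏ j ∈ range n,
        ((a + 1 + j - 1)! : ℝ) * ((b + 1 + j - 1)! : ℝ) * ((j + 1)! : ℝ) /
          ((a + 1 + (b + 1) + n + j - 2)! : ℝ) =
      ∏ j ∈ range n, ((a + j)! * (b + j)! * (j + 1)! / (a + b + n + j)! : ℝ) :=
    prod_congr rfl fun j _ => by
      rw [show a + 1 + j - 1 = a + j by omega, show b + 1 + j - 1 = b + j by omega,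
        show a + 1 + (b + 1) + n + j - 2 = a + b + n + j by omega]
  rw [hrhs, Nat.add_sub_cancel, Nat.add_sub_cancel]
  refine mul_left_cancel₀ (prod_descFactorial_ne_zero (a + b) n) ?_
  rw [prod_descFactorial_mul_selberg_integral_eq,
    factorial_mul_prod_div_eq_prod_descFactorial_mul_prod_div]

/-- Selberg's integral with γ = 1: for positive integers α, β, n,
`∫_{[0,1]^n} ∏ x_i^{α−1}(1−x_i)^{β−1} ∏_{i<j}(x_i−x_j)² dx
  = ∏_{j=0}^{n−1} (α+j−1)!·(β+j−1)!·(j+1)!/(α+β+n+j−2)!`. -/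
theorem selberg_integral_gamma_one (α β n : ℕ) (hα : 0 < α) (hβ : 0 < β) (hn : 0 < n) :
    ∫ x : Fin n → ℝ in Set.univ.pi (fun _ => Set.Icc (0 : ℝ) 1),
        (∏ i, x i ^ (α - 1) * (1 - x i) ^ (β - 1)) *
          ∏ i : Fin n, ∏ j ∈ Finset.Ioi i, (x i - x j) ^ 2 =
    ∏ j ∈ Finset.range n,
      ((α + j - 1).factorial : ℝ) * ((β + j - 1).factorial : ℝ) * ((j + 1).factorial : ℝ) /
        ((α + β + n + j - 2).factorial : ℝ) :=
  selberg_integral_gamma_one_general α β n hα hβ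
end

section
/- For indeterminates Y_1,...,Y_n, E_2,...,E_n, F_2,...,F_n and C, the determinant of the n×n matrix whose (i,j) entry is ∏_{k=2}^j (Y_i+F_k)(Y_i−F_k−C) · ∏_{k=j+1}^n (Y_i+E_k)(Y_i−E_k−C) equals ∏_{1≤i<j≤n}(Y_i−Y_j)(C−Y_i−Y_j) · ∏_{2≤i≤j≤n}(F_i−E_j)(F_i+E_j+C). -/
/-!
Since `(Y + F) (Y - F - C) = Y (Y - C) - F (F + C)`, the matrix is the basic determinant
`det (∏_{k=2}^{j} (x_i - β_k) ∏_{k=j+1}^{n} (x_i - α_k))` with `x_i = Y_i (Y_i - C)`,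
`β_k = F_k (F_k + C)`, `α_k = E_k (E_k + C)`, and the factors `x_j - x_i` and `β_i - α_j` of
its evaluation split into the stated ones; this substitution needs no division by 2.

For the basic determinant, the `j`-th column polynomial is `N_j s_j` with the Newton basis
polynomial `N_j = ∏_{k=2}^{j} (X - β_k)` (monic of degree `j - 1`) and
`s_j = ∏_{k>j} (X - α_k)`. Dividing repeatedly by `X - β_{j+1}, X - β_{j+2}, …` expands
`N_j s_j` as `∑_{m ≥ j} c_m N_m` with `c_j = s_j(β_{j+1})`. So the matrix is `(N_m(x_i))`
times a triangular matrix; the first factor has the Vandermonde determinant, the second the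
product of the `s_j(β_{j+1})`.
-/

section BasicDeterminant

open Finset Polynomial Lagrange

variable {R : Type*} [CommRing R]

theorem nodal_range_succ (b : ℕ → R) (m : ℕ) :
    nodal (range (m + 1)) b = (X - C (b m)) * nodal (range m) b := by
  rw [nodal, nodal, prod_range_succ, mul_comm]

theorem sum_range_C_single_mul (P : ℕ → R[X]) {m L : ℕ} (hm : m < L) (a : R) :
    ∑ i ∈ range L, C ((Pi.single m a : ℕ → R) i) * P i = C a * P m :=
  (sum_eq_single_of_mem m (mem_range.2 hm) fun i _ hi => by simp [hi]).trans (by simp)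

theorem exists_mul_nodal_range_eq_sum (b : ℕ → R) {f : R[X]} {d : ℕ} (hf : f.natDegree ≤ d)
    (m : ℕ) : ∃ c : ℕ → R, (∀ i < m, c i = 0) ∧ c m = f.eval (b m) ∧
      f * nodal (range m) b = ∑ i ∈ range (m + d + 1), C (c i) * nodal (range i) b := by
  induction d generalizing f m with
  | zero =>
    obtain ⟨a, rfl⟩ : ∃ a, f = C a := ⟨_, eq_C_of_natDegree_le_zero hf⟩
    exact ⟨Pi.single m a, fun i hi => Pi.single_eq_of_ne hi.ne _, by simp,
      (sum_range_C_single_mul (fun i => nodal (range i) b) (by omega) a).symm⟩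
  | succ d ih =>
    set g := f /ₘ (X - C (b m))
    have hfg : f = C (f.eval (b m)) + (X - C (b m)) * g := by
      rw [← modByMonic_X_sub_C_eq_C_eval, modByMonic_add_div]
    have hg : g.natDegree ≤ d := by
      nontriviality R
      rw [natDegree_divByMonic _ (monic_X_sub_C _), natDegree_X_sub_C]
      omega
    obtain ⟨c, hc_lt, -, hc_sum⟩ := ih hg (m + 1)
    refine ⟨c + Pi.single m (f.eval (b m)), fun i hi => ?_,
      by simp [hc_lt m m.lt_succ_self], ?_⟩
    · simp [hc_lt i (by omega), hi.ne]
    calc f * nodal (range m) b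
        = g * nodal (range (m + 1)) b + C (f.eval (b m)) * nodal (range m) b := by
          rw [nodal_range_succ]; nth_rewrite 1 [hfg]; ring
      _ = _ := by
          rw [hc_sum, show m + 1 + d + 1 = m + (d + 1) + 1 by omega,
            ← sum_range_C_single_mul (fun i => nodal (range i) b)
              (by omega : m < m + (d + 1) + 1), ← sum_add_distrib]
          simp only [Pi.add_apply, map_add, add_mul]

theorem prod_Icc_two_eq_prod_range {M : Type*} [CommMonoid M] (f : ℕ → M) (j : ℕ) :
    ∏ k ∈ Icc 2 (j + 1), f k = ∏ k ∈ range j, f (k + 2) := by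
  rw [← Ico_add_one_right_eq_Icc, prod_Ico_eq_prod_range, show j + 1 + 1 - 2 = j by omega]
  simp only [add_comm]

theorem prod_Icc_two_prod_Icc_eq_prod_fin {M : Type*} [CommMonoid M] (n : ℕ)
    (g : ℕ → ℕ → M) :
    ∏ i ∈ Icc 2 n, ∏ k ∈ Icc i n, g i k = ∏ j : Fin n, ∏ k ∈ Icc (j.val + 2) n, g (j + 2) k := by
  rw [Fin.prod_univ_eq_prod_range (fun j => ∏ k ∈ Icc (j + 2) n, g (j + 2) k),
    ← prod_Icc_two_eq_prod_range (fun i => ∏ k ∈ Icc i n, g i k)]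
  refine prod_subset (Icc_subset_Icc_right n.le_succ) fun i hi hi' => ?_
  have : i = n + 1 := by simp only [mem_Icc] at hi hi'; omega
  simp [this]

theorem det_prod_sub_mul_prod_sub (n : ℕ) (x : Fin n → R) (α β : ℕ → R) :
    (Matrix.of fun i j : Fin n =>
      (∏ k ∈ Icc 2 (j.val + 1), (x i - β k)) * ∏ k ∈ Icc (j.val + 2) n, (x i - α k)).det =
    (∏ i : Fin n, ∏ j ∈ Ioi i, (x j - x i)) * ∏ i ∈ Icc 2 n, ∏ j ∈ Icc i n, (β i - α j) := by
  nontriviality R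
  set b : ℕ → R := fun k => β (k + 2)
  have hcol (j : Fin n) : ∃ c : ℕ → R, (∀ i < j.val, c i = 0) ∧
      c j = ∏ k ∈ Icc (j.val + 2) n, (β (j + 2) - α k) ∧
      nodal (Icc (j.val + 2) n) α * nodal (range j) b =
        ∑ i ∈ range n, C (c i) * nodal (range i) b := by
    have hdeg : (nodal (Icc (j.val + 2) n) α).natDegree ≤ n - (j + 1) := by
      rw [natDegree_nodal, Nat.card_Icc]; omega
    simpa [eval_nodal, b, show j + (n - (j + 1)) + 1 = n by omega] using
      exists_mul_nodal_range_eq_sum b hdeg j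
  choose c hc_lt hc_diag hc_sum using hcol
  have hfac : (Matrix.of fun i j : Fin n =>
      (∏ k ∈ Icc 2 (j.val + 1), (x i - β k)) * ∏ k ∈ Icc (j.val + 2) n, (x i - α k)) =
      Matrix.of (fun i j : Fin n => (nodal (range j) b).eval (x i)) *
        Matrix.of (fun i j : Fin n => c j i) := by
    ext i j
    have hcol_eval := congrArg (eval (x i)) (hc_sum j)
    simp only [eval_mul, eval_C, eval_nodal, eval_finsetSum] at hcol_eval
    rw [Matrix.mul_apply, Matrix.of_apply, prod_Icc_two_eq_prod_range (fun k => x i - β k),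
      mul_comm, hcol_eval,
      ← Fin.sum_univ_eq_sum_range (fun k => c j k * ∏ l ∈ range k, (x i - b l))]
    simp [b, eval_nodal, mul_comm]
  have hL : (Matrix.of (fun i j : Fin n => c j i)).IsLowerTriangular :=
    fun i j hij => hc_lt j i hij
  rw [hfac, Matrix.det_mul, ← Matrix.det_eval_matrixOfPolynomials_eq_det_vandermonde _ _
    (fun i => by rw [natDegree_nodal, card_range]) fun _ => nodal_monic,
    Matrix.det_vandermonde, Matrix.det_of_isLowerTriangular _ hL]
  simp only [Matrix.of_apply, hc_diag, prod_Icc_two_prod_Icc_eq_prod_fin]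

end BasicDeterminant

/-- A special case of Krattenthaler's Lemma 9: the determinant of the matrix
with (i,j) entry `∏_{k=2}^j (Y_i+F_k)(Y_i−F_k−C) · ∏_{k=j+1}^n (Y_i+E_k)(Y_i−E_k−C)`
equals `∏_{i<j}(Y_i−Y_j)(C−Y_i−Y_j) · ∏_{2≤i≤j≤n}(F_i−E_j)(F_i+E_j+C)`.
Indices are 1-based. -/
theorem krattenthaler_lemma9 (R : Type*) [CommRing R] (n : ℕ) (Y E F : ℕ → R) (C : R) :
    Matrix.det (Matrix.of fun i j : Fin n =>
      (∏ k ∈ Finset.Icc 2 (j.val + 1), (Y (i.val + 1) + F k) * (Y (i.val + 1) - F k - C)) *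
      (∏ k ∈ Finset.Icc (j.val + 2) n, (Y (i.val + 1) + E k) * (Y (i.val + 1) - E k - C))) =
    (∏ i : Fin n, ∏ j ∈ Finset.Ioi i,
        (Y (i.val + 1) - Y (j.val + 1)) * (C - Y (i.val + 1) - Y (j.val + 1))) *
    (∏ i ∈ Finset.Icc 2 n, ∏ j ∈ Finset.Icc i n, (F i - E j) * (F i + E j + C)) := by
  have hfactor (y z : R) : (y + z) * (y - z - C) = y * (y - C) - z * (z + C) := by ring
  simp only [hfactor]
  rw [det_prod_sub_mul_prod_sub n (fun i => Y (i + 1) * (Y (i + 1) - C))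
    (fun k => E k * (E k + C)) (fun k => F k * (F k + C))]
  congr 1 <;> exact Finset.prod_congr rfl fun i _ => Finset.prod_congr rfl fun j _ => by ring
end
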